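/- arXiv:1610.03384 — 9 statements merged into one kernel-verified Lean document; each statement's English description precedes it below -/
import Mathlib

section
/- For integers A, B with discriminant Δ = A² − 4B, any odd prime p, and any positive integer n, the quantity (u_{pn}(A,B) − (Δ/p)·u_n(A,B))/(pn) is a p-adic integer, where (Δ/p) is the Legendre symbol. -/
/-- Lucas sequence `u n (A, B)`: `u 0 = 0`, `u 1 = 1`, `u (n+2) = A * u (n+1) - B * u n`. -/
def lucasU (A B : ℤ) : ℕ → ℤ
  | 0 => 0
  | 1 => 1
  | n + 2 => A * lucasU A B (n + 1) - B * lucasU A B n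

/-- Companion Lucas sequence `v n (A, B)`: `v 0 = 2`, `v 1 = A`, `v (n+2) = A * v (n+1) - B * v n`. -/
def lucasV (A B : ℤ) : ℕ → ℤ
  | 0 => 2
  | 1 => A
  | n + 2 => A * lucasV A B (n + 1) - B * lucasV A B n

/-!
Let `α, β` be the roots of `X² - A X + B`, `δ = α - β` (so `δ² = Δ`) and `ε = (Δ/p)`.
Expanding `(2α)^p = (A + δ)^p` modulo `p` and using Fermat and Euler's criterion gives
`2α^p ≡ A + εδ` and `2β^p ≡ A - εδ (mod p)`. A congruence modulo `p` raised to the power `p^k`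
holds modulo `p^(k+1)`, so for `n = p^k m` Binet's formula `α^n - β^n = u_n δ` yields
`p^(k+1) ∣ 2^n (u_{pn} - ε u_n) δ`. Taking `α = ω` in `ℤ[ω]`, `ω² = Aω - B`, the
`ω`-coordinate of this multiple of `δ = 2ω - A` is `2^(n+1) (u_{pn} - ε u_n)`, and `p` is odd.
Finally `pn` and `p^(k+1)` differ by the `p`-adic unit `m`.
-/

open QuadraticAlgebra

theorem pow_succ_dvd_pow_pow_mul_sub_pow_pow_mul {R : Type*} [CommRing R] {p : ℕ} {x y : R}
    (h : (p : R) ∣ x - y) (k m : ℕ) :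
    (p : R) ^ (k + 1) ∣ x ^ (p ^ k * m) - y ^ (p ^ k * m) := by
  rw [mul_comm, pow_mul, pow_mul]
  exact dvd_sub_pow_of_dvd_sub (h.trans (sub_dvd_pow_sub_pow x y m)) k

theorem QuadraticAlgebra.intCast_dvd_iff {R : Type*} [CommRing R] {a b : R} (n : ℤ)
    (z : QuadraticAlgebra R a b) :
    (n : QuadraticAlgebra R a b) ∣ z ↔ (n : R) ∣ z.re ∧ (n : R) ∣ z.im := by
  constructor
  · rintro ⟨t, rfl⟩
    simp
  · rintro ⟨⟨x, hx⟩, ⟨y, hy⟩⟩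
    exact ⟨⟨x, y⟩, by ext <;> simp [hx, hy]⟩

theorem PadicInt.natCast_mul_pow_mul_dvd_intCast {p : ℕ} [hp : Fact p.Prime] {k m : ℕ}
    (hm : ¬p ∣ m) {c : ℤ} (hc : (p : ℤ) ^ (k + 1) ∣ c) :
    (p : ℤ_[p]) * ((p ^ k * m : ℕ) : ℤ_[p]) ∣ (c : ℤ_[p]) := by
  obtain ⟨d, rfl⟩ := hc
  have hunit : IsUnit (m : ℤ_[p]) :=
    isUnit_iff.2 (norm_natCast_eq_one_iff.2 ((Nat.Prime.coprime_iff_not_dvd hp.out).2 hm))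
  rw [show (p : ℤ_[p]) * ((p ^ k * m : ℕ) : ℤ_[p]) = p ^ (k + 1) * m by push_cast; ring]
  push_cast
  exact mul_dvd_mul_left _ hunit.dvd

section Roots

variable {S : Type*} [CommRing S] {A B : ℤ} {α β : S}

theorem pow_sub_pow_eq_lucasU_mul (hsum : α + β = A) (hprod : α * β = B) :
    ∀ n : ℕ, α ^ n - β ^ n = lucasU A B n * (α - β)
  | 0 => by simp [lucasU]
  | 1 => by simp [lucasU]
  | n + 2 => by
    rw [lucasU]
    push_cast
    linear_combination (α ^ (n + 1) - β ^ (n + 1)) * hsum - (α ^ n - β ^ n) * hprod +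
      A * pow_sub_pow_eq_lucasU_mul hsum hprod (n + 1) -
      B * pow_sub_pow_eq_lucasU_mul hsum hprod n

theorem sub_sq_eq_discrim (hsum : α + β = A) (hprod : α * β = B) :
    (α - β) ^ 2 = ((A ^ 2 - 4 * B : ℤ) : S) := by
  push_cast
  linear_combination (α + β + A) * hsum - 4 * hprod

theorem add_mul_pow_sub_sub_mul_pow (hsum : α + β = A) (hprod : α * β = B) {ε : ℤ}
    (hε : ε = 0 ∨ ε = 1 ∨ ε = -1) (n : ℕ) :
    (A + ε * (α - β)) ^ n - (A - ε * (α - β)) ^ n = ε * 2 ^ n * lucasU A B n * (α - β) := by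
  have hα : (A : S) + (α - β) = 2 * α := by linear_combination -hsum
  have hβ : (A : S) - (α - β) = 2 * β := by linear_combination -hsum
  have hpow := pow_sub_pow_eq_lucasU_mul hsum hprod n
  rcases hε with rfl | rfl | rfl
  · simp
  · rw [Int.cast_one, one_mul, hα, hβ, mul_pow, mul_pow]
    linear_combination 2 ^ n * hpow
  · rw [Int.cast_neg, Int.cast_one, neg_one_mul, ← sub_eq_add_neg, sub_neg_eq_add, hα, hβ,
      mul_pow, mul_pow]
    linear_combination -2 ^ n * hpow

theorem dvd_two_mul_pow_prime_sub (p : ℕ) [hp : Fact p.Prime] (hp2 : p ≠ 2)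
    (hsum : α + β = A) (hprod : α * β = B) :
    (p : S) ∣ 2 * α ^ p - (A + legendreSym p (A ^ 2 - 4 * B) * (α - β)) := by
  set Δ := A ^ 2 - 4 * B
  set ε := legendreSym p Δ
  have hp_odd : p = 2 * (p / 2) + 1 :=
    (Nat.two_mul_div_two_add_one_of_odd (hp.out.odd_of_ne_two hp2)).symm
  have hδ : (α - β) ^ p = (Δ : S) ^ (p / 2) * (α - β) := by
    rw [← sub_sq_eq_discrim hsum hprod, ← pow_mul, ← pow_succ, ← hp_odd]
  obtain ⟨r, hr⟩ := exists_add_pow_prime_eq hp.out (A : S) (α - β)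
  rw [show (A : S) + (α - β) = 2 * α by linear_combination -hsum, mul_pow] at hr
  have hA : (p : ℤ) ∣ A ^ p - A := (Int.ModEq.pow_prime_eq_self hp.out A).symm.dvd
  have h2 : (p : ℤ) ∣ 2 ^ p - 2 := (Int.ModEq.pow_prime_eq_self hp.out 2).symm.dvd
  have hε : (p : ℤ) ∣ Δ ^ (p / 2) - ε :=
    (ZMod.intCast_eq_intCast_iff_dvd_sub _ _ _).1 (by push_cast; exact legendreSym.eq_pow p Δ)
  have cast_dvd {x : ℤ} (h : (p : ℤ) ∣ x) : (p : S) ∣ x := by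
    simpa using Int.cast_dvd_cast _ _ h
  have key : 2 * α ^ p - (A + ε * (α - β)) = p * A * (α - β) * r - ((2 ^ p - 2 : ℤ) : S) * α ^ p
      + ((A ^ p - A : ℤ) : S) + ((Δ ^ (p / 2) - ε : ℤ) : S) * (α - β) := by
    push_cast
    linear_combination hr + hδ
  rw [key]
  have hr_dvd : (p : S) ∣ p * A * (α - β) * r :=
    dvd_mul_of_dvd_left (dvd_mul_of_dvd_left (dvd_mul_right _ _) _) _
  exact dvd_add (dvd_add (dvd_sub hr_dvd (dvd_mul_of_dvd_left (cast_dvd h2) _)) (cast_dvd hA))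
    (dvd_mul_of_dvd_left (cast_dvd hε) _)

theorem pow_succ_dvd_two_pow_mul_lucasU_sub_mul (p : ℕ) [Fact p.Prime] (hp2 : p ≠ 2)
    (hsum : α + β = A) (hprod : α * β = B) (k m : ℕ) :
    (p : S) ^ (k + 1) ∣ ((2 ^ (p ^ k * m) * (lucasU A B (p * (p ^ k * m))
      - legendreSym p (A ^ 2 - 4 * B) * lucasU A B (p ^ k * m)) : ℤ) : S) * (α - β) := by
  set n := p ^ k * m
  set ε := legendreSym p (A ^ 2 - 4 * B)
  have hα := pow_succ_dvd_pow_pow_mul_sub_pow_pow_mul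
    (dvd_two_mul_pow_prime_sub p hp2 hsum hprod) k m
  have hβ := pow_succ_dvd_pow_pow_mul_sub_pow_pow_mul
    (dvd_two_mul_pow_prime_sub p hp2 ((add_comm β α).trans hsum) ((mul_comm β α).trans hprod)) k m
  have hε : ε = 0 ∨ ε = 1 ∨ ε = -1 := by
    simpa only [ε, jacobiSym.legendreSym.to_jacobiSym] using jacobiSym.trichotomy _ p
  have hdiff := add_mul_pow_sub_sub_mul_pow hsum hprod hε n
  have hpow := pow_sub_pow_eq_lucasU_mul hsum hprod (p * n)
  convert dvd_sub hα hβ using 1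
  push_cast
  linear_combination -2 ^ n * hpow + hdiff

end Roots

theorem pow_succ_dvd_lucasU_mul_sub (p : ℕ) [hp : Fact p.Prime] (hp2 : p ≠ 2) (A B : ℤ)
    (k m : ℕ) :
    (p : ℤ) ^ (k + 1) ∣
      lucasU A B (p * (p ^ k * m)) - legendreSym p (A ^ 2 - 4 * B) * lucasU A B (p ^ k * m) := by
  set α : QuadraticAlgebra ℤ (-B) A := ω
  have hsum : α + star α = A := by ext <;> simp [α]
  have hprod : α * star α = B := by ext <;> simp [α]
  have h := pow_succ_dvd_two_pow_mul_lucasU_sub_mul p hp2 hsum hprod k m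
  set c :=
    lucasU A B (p * (p ^ k * m)) - legendreSym p (A ^ 2 - 4 * B) * lucasU A B (p ^ k * m)
  have h' : (((p : ℤ) ^ (k + 1) : ℤ) : QuadraticAlgebra ℤ (-B) A) ∣
      ((2 ^ (p ^ k * m) * c : ℤ) : QuadraticAlgebra ℤ (-B) A) * (α - star α) := by
    simpa using h
  have him : (p : ℤ) ^ (k + 1) ∣ 2 ^ (p ^ k * m + 1) * c := by
    have := ((intCast_dvd_iff _ _).1 h').2
    simp only [α, im_mul, re_intCast, im_intCast, im_sub, im_star, omega_im, Int.cast_id]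
      at this
    exact this.trans (dvd_of_eq (by ring))
  have hcop : IsCoprime ((p : ℤ) ^ (k + 1)) (2 ^ (p ^ k * m + 1)) :=
    (Nat.isCoprime_iff_coprime.2 ((Nat.coprime_primes hp.out Nat.prime_two).2 hp2)).pow
  exact hcop.dvd_of_dvd_mul_left him

theorem lucasU_padic_general (A B : ℤ) (p : ℕ) [Fact p.Prime] (hp2 : p ≠ 2) (n : ℕ) :
    ∃ z : ℤ_[p],
      ((lucasU A B (p * n) - legendreSym p (A ^ 2 - 4 * B) * lucasU A B n : ℤ) : ℤ_[p])
        = (p : ℤ_[p]) * (n : ℤ_[p]) * z := by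
  rcases eq_or_ne n 0 with rfl | hn
  · exact ⟨0, by simp [lucasU]⟩
  obtain ⟨k, m, hm, rfl⟩ := Nat.exists_eq_pow_mul_and_not_dvd hn p (Fact.out : p.Prime).ne_one
  exact PadicInt.natCast_mul_pow_mul_dvd_intCast hm (pow_succ_dvd_lucasU_mul_sub p hp2 A B k m)

theorem lucasU_padic (A B : ℤ) (p : ℕ) [Fact p.Prime] (hp2 : p ≠ 2) (n : ℕ) (hn : 0 < n) :
    ∃ z : ℤ_[p],
      ((lucasU A B (p * n) - legendreSym p (A ^ 2 - 4 * B) * lucasU A B n : ℤ) : ℤ_[p])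
        = (p : ℤ_[p]) * (n : ℤ_[p]) * z :=
  lucasU_padic_general A B p hp2 n
end

section
/- For integers A, B, any odd prime p, and any positive integer n, the quantity (v_{pn}(A,B) − v_n(A,B))/(pn) is a p-adic integer. -/
/-!
Since `v_{mk}(A, B) = v_k(v_m(A, B), B^m)`, the pairs `(v_{p^k m}, B^{p^k m})` are the iterates of
`Φ(x, y) = (v_p(x, y), y^p)`. As a polynomial with integer coefficients, `v_p(x, y) ≡ x^p mod p`:
over an algebraically closed field of characteristic `p`, `v_p = α^p + β^p = (α + β)^p`. Hence `Φ`
is the identity mod `p` (Fermat), and it turns congruences mod `p^M`, `M ≥ 1`, into congruences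
mod `p^(M+1)`. By induction `v_{p^(k+1) m} ≡ v_{p^k m} mod p^(k+1)`; take `n = p^k m` with `p ∤ m`.
-/

open Polynomial in
theorem IsAlgClosed.exists_add_eq_and_mul_eq {K : Type*} [Field K] [IsAlgClosed K] (a b : K) :
    ∃ α β : K, α + β = a ∧ α * β = b := by
  have hdeg : (X ^ 2 - C a * X + C b : K[X]).degree = 2 := by compute_degree!
  obtain ⟨α, hα⟩ := IsAlgClosed.exists_root _ (hdeg ▸ two_ne_zero)
  refine ⟨α, a - α, by ring, ?_⟩
  simp only [IsRoot, eval_add, eval_sub, eval_mul, eval_pow, eval_X, eval_C] at hα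
  linear_combination -hα

theorem intCast_lucasV_eq_pow_add_pow {R : Type*} [CommRing R] {A B : ℤ} {α β : R}
    (hA : (A : R) = α + β) (hB : (B : R) = α * β) : ∀ n, (lucasV A B n : R) = α ^ n + β ^ n
  | 0 => by simp [lucasV]; norm_num
  | 1 => by simp [lucasV, hA]
  | n + 2 => by
    push_cast [lucasV, intCast_lucasV_eq_pow_add_pow hA hB (n + 1),
      intCast_lucasV_eq_pow_add_pow hA hB n, hA, hB]
    ring

theorem lucasV_mul (A B : ℤ) (m k : ℕ) :
    lucasV A B (m * k) = lucasV (lucasV A B m) (B ^ m) k := by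
  obtain ⟨α, β, hA, hB⟩ := IsAlgClosed.exists_add_eq_and_mul_eq (A : ℂ) B
  have hv : ((lucasV A B m : ℤ) : ℂ) = α ^ m + β ^ m :=
    intCast_lucasV_eq_pow_add_pow hA.symm hB.symm m
  have hBm : ((B ^ m : ℤ) : ℂ) = α ^ m * β ^ m := by push_cast; rw [← hB, mul_pow]
  apply Int.cast_injective (α := ℂ)
  rw [intCast_lucasV_eq_pow_add_pow hA.symm hB.symm, intCast_lucasV_eq_pow_add_pow hv hBm,
    pow_mul, pow_mul]

open MvPolynomial

noncomputable def lucasVPoly : ℕ → MvPolynomial (Fin 2) ℤ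
  | 0 => 2
  | 1 => X 0
  | n + 2 => X 0 * lucasVPoly (n + 1) - X 1 * lucasVPoly n

theorem eval_lucasVPoly (A B : ℤ) : ∀ n, eval ![A, B] (lucasVPoly n) = lucasV A B n
  | 0 => by simp [lucasVPoly, lucasV]
  | 1 => by simp [lucasVPoly, lucasV]
  | n + 2 => by
    simp [lucasVPoly, lucasV, eval_lucasVPoly A B (n + 1), eval_lucasVPoly A B n]

theorem eval₂_lucasVPoly {R : Type*} [CommRing R] (α β : R) :
    ∀ n, eval₂ (Int.castRingHom R) ![α + β, α * β] (lucasVPoly n) = α ^ n + β ^ n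
  | 0 => by simp [lucasVPoly]; norm_num
  | 1 => by simp [lucasVPoly]
  | n + 2 => by
    simp only [lucasVPoly, eval₂_sub, eval₂_mul, eval₂_X, eval₂_lucasVPoly α β (n + 1),
      eval₂_lucasVPoly α β n]
    simp; ring

theorem eval₂_lucasVPoly_prime {S : Type*} [CommRing S] [IsDomain S] (p : ℕ) [Fact p.Prime]
    [CharP S p] (a b : S) : eval₂ (Int.castRingHom S) ![a, b] (lucasVPoly p) = a ^ p := by
  let K := AlgebraicClosure (FractionRing S)
  have : CharP K p := charP_of_injective_algebraMap' (FractionRing S) p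
  have hι : Function.Injective (algebraMap S K) := by
    rw [IsScalarTower.algebraMap_eq S (FractionRing S) K]
    exact (algebraMap (FractionRing S) K).injective.comp (IsFractionRing.injective S _)
  obtain ⟨α, β, ha, hb⟩ :=
    IsAlgClosed.exists_add_eq_and_mul_eq (algebraMap S K a) (algebraMap S K b)
  have hroots : algebraMap S K ∘ ![a, b] = ![α + β, α * β] := by
    funext i; fin_cases i <;> simp [ha, hb]
  apply hι
  rw [eval₂_comp_left, hroots, RingHom.ext_int ((algebraMap S K).comp _) (Int.castRingHom K),
    eval₂_lucasVPoly, map_pow, ← ha, add_pow_char]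

theorem C_dvd_lucasVPoly_prime_sub (p : ℕ) [Fact p.Prime] :
    C (p : ℤ) ∣ lucasVPoly p - X 0 ^ p := by
  have hX : ![X 0, X 1] = (X : Fin 2 → MvPolynomial (Fin 2) (ZMod p)) := by
    funext i; fin_cases i <;> rfl
  have h := eval₂_lucasVPoly_prime p (X 0 : MvPolynomial (Fin 2) (ZMod p)) (X 1)
  rw [hX] at h
  rw [C_dvd_iff_map_hom_eq_zero (Int.castRingHom (ZMod p)) _
    (fun r => ZMod.intCast_zmod_eq_zero_iff_dvd r p), map_sub, map_pow, map_X, sub_eq_zero,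
    map_eq_eval₂Hom_C_comp, coe_eval₂Hom, RingHom.ext_int (C.comp _) (Int.castRingHom _), h]

theorem exists_lucasV_prime_eq (p : ℕ) [Fact p.Prime] :
    ∃ W : MvPolynomial (Fin 2) ℤ, ∀ x y : ℤ, lucasV x y p = x ^ p + p * eval ![x, y] W := by
  obtain ⟨W, hW⟩ := C_dvd_lucasVPoly_prime_sub p
  refine ⟨W, fun x y => ?_⟩
  rw [← eval_lucasVPoly, sub_eq_iff_eq_add'.1 hW]
  simp

theorem MvPolynomial.eval_smodEq {R σ : Type*} [CommRing R] {I : Ideal R} {x y : σ → R}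
    (h : ∀ i, x i ≡ y i [SMOD I]) (f : MvPolynomial σ R) : eval x f ≡ eval y f [SMOD I] := by
  simp_rw [eval_eq]
  gcongr with d _ i
  exact h i

section Congruences

variable {p : ℕ} [Fact p.Prime] {I : Ideal ℤ}

theorem Int.pow_prime_smodEq_self (hpI : (p : ℤ) ∈ I) (x : ℤ) : x ^ p ≡ x [SMOD I] :=
  SModEq.sub_mem.2 (I.mem_of_dvd (Int.prime_dvd_pow_self_sub Fact.out x) hpI)

theorem lucasV_prime_smodEq_self (hpI : (p : ℤ) ∈ I) (x y : ℤ) : lucasV x y p ≡ x [SMOD I] := by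
  obtain ⟨W, hW⟩ := exists_lucasV_prime_eq p
  rw [hW]
  calc x ^ p + p * eval ![x, y] W ≡ x ^ p + 0 [SMOD I] :=
        SModEq.rfl.add (SModEq.zero.2 (I.mul_mem_right _ hpI))
    _ ≡ x [SMOD I] := by rw [add_zero]; exact Int.pow_prime_smodEq_self hpI x

theorem lucasV_prime_smodEq_of_smodEq (hpI : (p : ℤ) ∈ I) {M : ℕ} (hM : M ≠ 0) {x x' y y' : ℤ}
    (hx : x ≡ x' [SMOD I ^ M]) (hy : y ≡ y' [SMOD I ^ M]) :
    lucasV x y p ≡ lucasV x' y' p [SMOD I ^ (M + 1)] := by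
  obtain ⟨W, hW⟩ := exists_lucasV_prime_eq p
  have hWxy : eval ![x, y] W ≡ eval ![x', y'] W [SMOD I ^ M] :=
    eval_smodEq (fun i => by fin_cases i <;> assumption) W
  rw [hW, hW]
  refine (hx.pow_add_one hpI hM).add (SModEq.sub_mem.2 ?_)
  rw [← mul_sub, pow_succ']
  exact Ideal.mul_mem_mul hpI (SModEq.sub_mem.1 hWxy)

theorem lucasV_prime_pow_succ_mul_smodEq (hpI : (p : ℤ) ∈ I) (A B : ℤ) (m : ℕ) :
    ∀ k, lucasV A B (p ^ (k + 1) * m) ≡ lucasV A B (p ^ k * m) [SMOD I ^ (k + 1)]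
  | 0 => by
    simpa [lucasV_mul, mul_comm p m] using lucasV_prime_smodEq_self hpI (lucasV A B m) (B ^ m)
  | k + 1 => by
    have hv (j : ℕ) : lucasV A B (p ^ (j + 1) * m)
        = lucasV (lucasV A B (p ^ j * m)) (B ^ (p ^ j * m)) p := by
      rw [← lucasV_mul, pow_succ, mul_right_comm]
    have hB : B ^ (p ^ (k + 1) * m) ≡ B ^ (p ^ k * m) [SMOD I ^ (k + 1)] := by
      rw [show p ^ (k + 1) * m = m * p * p ^ k by ring, show p ^ k * m = m * p ^ k by ring]
      simpa only [pow_mul] using (Int.pow_prime_smodEq_self hpI (B ^ m)).pow_pow_add_one hpI k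
    have h := lucasV_prime_smodEq_of_smodEq hpI k.succ_ne_zero
      (lucasV_prime_pow_succ_mul_smodEq hpI A B m k) hB
    rwa [← hv k, ← hv (k + 1)] at h

end Congruences

theorem lucasV_padic_general (A B : ℤ) (p : ℕ) [Fact p.Prime] (n : ℕ) (hn : 0 < n) :
    ∃ z : ℤ_[p],
      ((lucasV A B (p * n) - lucasV A B n : ℤ) : ℤ_[p])
        = (p : ℤ_[p]) * (n : ℤ_[p]) * z := by
  obtain ⟨e, u, hpu, rfl⟩ :=
    Nat.exists_eq_pow_mul_and_not_dvd hn.ne' p (Fact.out : p.Prime).ne_one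
  have hdvd : (p : ℤ) ^ (e + 1) ∣ lucasV A B (p * (p ^ e * u)) - lucasV A B (p ^ e * u) := by
    have h := lucasV_prime_pow_succ_mul_smodEq (Ideal.mem_span_singleton_self (p : ℤ)) A B u e
    rwa [SModEq.sub_mem, Ideal.span_singleton_pow, Ideal.mem_span_singleton,
      show p ^ (e + 1) * u = p * (p ^ e * u) by ring] at h
  have hu : IsUnit (u : ℤ_[p]) := PadicInt.isUnit_iff.2
    (PadicInt.norm_natCast_eq_one_iff.2 ((Nat.Prime.coprime_iff_not_dvd Fact.out).2 hpu))
  show (_ : ℤ_[p]) ∣ _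
  rw [show (p : ℤ_[p]) * ((p ^ e * u : ℕ) : ℤ_[p]) = (p : ℤ_[p]) ^ (e + 1) * u by push_cast; ring,
    hu.mul_right_dvd]
  exact_mod_cast map_dvd (Int.castRingHom ℤ_[p]) hdvd

theorem lucasV_padic (A B : ℤ) (p : ℕ) [Fact p.Prime] (hp2 : p ≠ 2) (n : ℕ) (hn : 0 < n) :
    ∃ z : ℤ_[p],
      ((lucasV A B (p * n) - lucasV A B n : ℤ) : ℤ_[p])
        = (p : ℤ_[p]) * (n : ℤ_[p]) * z :=
  lucasV_padic_general A B p n hn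
end

section
/- Let p be an odd prime, A, B integers with p ∤ B and Δ = A²−4B. Then p divides u_{p−(Δ/p)}(A,B), where (Δ/p) is the Legendre symbol. -/
open QuadraticAlgebra

section LucasOmega

variable {R : Type*} [CommRing R] (A B : ℤ)

theorem omega_pow_succ_eq_mk_lucasU (n : ℕ) :
    (ω : QuadraticAlgebra R (-B) A) ^ (n + 1) = ⟨-B * lucasU A B n, lucasU A B (n + 1)⟩ := by
  induction n with
  | zero => ext <;> simp [lucasU]
  | succ n ih =>
    rw [pow_succ, ih]
    ext <;> simp [lucasU]; ring

theorem im_omega_pow_eq_lucasU (n : ℕ) :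
    ((ω : QuadraticAlgebra R (-B) A) ^ n).im = lucasU A B n := by
  cases n with
  | zero => simp [lucasU]
  | succ n => simp [omega_pow_succ_eq_mk_lucasU]

theorem omega_sq_eq_mul_sub :
    (ω : QuadraticAlgebra R (-B) A) ^ 2 =
      (A : QuadraticAlgebra R (-B) A) * ω - (B : QuadraticAlgebra R (-B) A) := by
  ext <;> simp [sq]

end LucasOmega

section CharP

variable {S : Type*} [CommRing S] {p : ℕ} [Fact p.Prime] [CharP S p]

theorem intCast_pow_char (n : ℤ) : (n : S) ^ p = n :=
  map_intCast (frobenius S p) n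

theorem pow_char_eq_legendreSym_mul_of_sq_eq_intCast (hp2 : p ≠ 2) {s : S} {d : ℤ}
    (hs : s ^ 2 = d) : s ^ p = legendreSym p d * s := by
  obtain ⟨k, hk⟩ := (Fact.out : p.Prime).odd_of_ne_two hp2
  have hℓ : (legendreSym p d : S) = (d : S) ^ k := by
    simpa [show p / 2 = k by omega] using
      congrArg (ZMod.castHom (dvd_refl p) S) (legendreSym.eq_pow p d)
  rw [hℓ, ← hs, ← pow_mul, ← pow_succ, hk]

theorem two_mul_pow_char_eq_add_legendreSym_mul (hp2 : p ≠ 2) {α : S} {A B : ℤ}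
    (hα : α ^ 2 = A * α - B) :
    2 * α ^ p = A + legendreSym p (A ^ 2 - 4 * B) * (2 * α - A) := by
  have hsq : (2 * α - A) ^ 2 = ((A ^ 2 - 4 * B : ℤ) : S) := by
    push_cast; linear_combination 4 * hα
  have h := add_pow_char (A : S) (2 * α - A) p
  have h2 : (2 : S) ^ p = 2 := by exact_mod_cast intCast_pow_char (S := S) 2
  rwa [add_sub_cancel, mul_pow, h2, intCast_pow_char,
    pow_char_eq_legendreSym_mul_of_sq_eq_intCast hp2 hsq] at h

end CharP

namespace QuadraticAlgebra

instance charP {R : Type*} [CommRing R] {a b : R} (p : ℕ) [CharP R p] :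
    CharP (QuadraticAlgebra R a b) p :=
  charP_of_injective_algebraMap algebraMap_injective p

theorem isUnit_omega {R : Type*} [CommRing R] {a b : R} (ha : IsUnit a) :
    IsUnit (ω : QuadraticAlgebra R a b) := by
  have h : (ω : QuadraticAlgebra R a b) * (ω - algebraMap R _ b) = algebraMap R _ a := by
    ext <;> simp
  exact isUnit_of_mul_isUnit_left (h ▸ ha.map _)

theorem im_eq_zero_of_two_mul_eq_intCast {R : Type*} [CommRing R] [NoZeroDivisors R] {a b : R}
    (h2 : (2 : R) ≠ 0) {x : QuadraticAlgebra R a b} {c : ℤ} (h : 2 * x = c) : x.im = 0 := by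
  simpa [h2] using congrArg im h

end QuadraticAlgebra

theorem exists_two_mul_omega_pow_eq_intCast (A B : ℤ) (p : ℕ) [Fact p.Prime] (hp2 : p ≠ 2)
    (hB : ¬ (p : ℤ) ∣ B) : ∃ c : ℤ, 2 * (ω : QuadraticAlgebra (ZMod p) (-B) A) ^
      ((p : ℤ) - legendreSym p (A ^ 2 - 4 * B)).toNat = c := by
  have hp_two_le := (Fact.out : p.Prime).two_le
  have hω := omega_sq_eq_mul_sub (R := ZMod p) A B
  have hfrob := two_mul_pow_char_eq_add_legendreSym_mul hp2 hω
  rcases eq_or_ne ((A ^ 2 - 4 * B : ℤ) : ZMod p) 0 with hΔ | hΔ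
  · rw [(legendreSym.eq_zero_iff p _).mpr hΔ] at hfrob ⊢
    exact ⟨A, by simpa using hfrob⟩
  rcases legendreSym.eq_one_or_neg_one p hΔ with hℓ | hℓ <;> rw [hℓ] at hfrob ⊢
  · have hBp : (B : ZMod p) ≠ 0 := mt (ZMod.intCast_zmod_eq_zero_iff_dvd B p).mp hB
    refine ⟨2, (isUnit_omega (isUnit_iff_ne_zero.mpr hBp).neg).mul_right_cancel ?_⟩
    rw [show ((p : ℤ) - 1).toNat = p - 1 by omega, mul_assoc, pow_sub_one_mul (by omega), hfrob]
    push_cast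
    ring
  · refine ⟨2 * B, ?_⟩
    rw [show ((p : ℤ) - -1).toNat = p + 1 by omega, pow_succ, ← mul_assoc, hfrob]
    push_cast
    linear_combination (-2 : QuadraticAlgebra (ZMod p) (-B) A) * hω

theorem prime_dvd_lucasU (A B : ℤ) (p : ℕ) [Fact p.Prime] (hp2 : p ≠ 2)
    (hB : ¬ (p : ℤ) ∣ B) :
    (p : ℤ) ∣ lucasU A B ((p : ℤ) - legendreSym p (A ^ 2 - 4 * B)).toNat := by
  obtain ⟨c, hc⟩ := exists_two_mul_omega_pow_eq_intCast A B p hp2 hB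
  rw [← ZMod.intCast_zmod_eq_zero_iff_dvd, ← im_omega_pow_eq_lucasU]
  exact im_eq_zero_of_two_mul_eq_intCast (Ring.two_ne_zero (by rwa [ZMod.ringChar_zmod_n])) hc
end

section
/- Let p be an odd prime and let a be a p-adic integer with a ≢ 0 (mod p). Then for any positive integer n, (a^{(p−1)n} − 1)/(pn) is a p-adic integer, and moreover (a^{(p−1)n} − 1)/(pn) ≡ (a^{p−1} − 1)/p (mod p). -/
private lemma lemB {R : Type*} [CommRing R] (t : R) (m : ℕ) :
    ∃ F : R, (1 + t) ^ m = 1 + m * t + t ^ 2 * F := by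
  induction m with
  | zero => exact ⟨0, by push_cast; ring⟩
  | succ m ih =>
    obtain ⟨F, hF⟩ := ih
    refine ⟨F + m + t * F, ?_⟩
    rw [pow_succ, hF]; push_cast; ring

private lemma lemA {R : Type*} [CommRing R] {p : ℕ} (hp : p.Prime) (hp2 : p ≠ 2)
    (q d : R) (hq : (p : R) ∣ q) :
    ∃ e : R, (1 + q * d) ^ p = 1 + p * (q * d) + p * q ^ 2 * e := by
  have hp3 : 3 ≤ p := by
    have h2 := hp.two_le
    rcases Nat.lt_or_ge p 3 with h | h
    · interval_cases p <;> simp_all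
    · exact h
  suffices h : (p : R) * q ^ 2 ∣ (1 + q * d) ^ p - 1 - p * (q * d) by
    obtain ⟨e, he⟩ := h
    exact ⟨e, by linear_combination he⟩
  set t := q * d with ht
  have hexp : (1 + t) ^ p = ∑ k ∈ Finset.range (p + 1), t ^ k * (p.choose k : R) := by
    rw [add_comm 1 t, add_pow]
    simp
  have hpeel : (1 + t) ^ p - 1 - p * t
      = ∑ i ∈ Finset.range (p - 1), t ^ (i + 2) * (p.choose (i + 2) : R) := by
    have h1 : p + 1 = (p - 1) + 1 + 1 := by omega
    rw [hexp, h1, Finset.sum_range_succ', Finset.sum_range_succ']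
    simp [Nat.choose_one_right]
    ring
  rw [hpeel]
  refine Finset.dvd_sum ?_
  intro i hi
  simp only [Finset.mem_range] at hi
  have hq2 : q ^ 2 ∣ t ^ (i + 2) := by
    rw [ht, mul_pow]
    exact dvd_mul_of_dvd_left (pow_dvd_pow q (by omega)) _
  rcases lt_or_ge (i + 2) p with h | h
  · have hc : (p : R) ∣ (p.choose (i + 2) : R) :=
      Nat.cast_dvd_cast (Nat.Prime.dvd_choose_self hp (by omega) h)
    obtain ⟨r, hr⟩ := hc
    obtain ⟨s, hs⟩ := hq2
    exact ⟨s * r, by rw [hs, hr]; ring⟩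
  · -- i + 2 = p
    have hip : i + 2 = p := by omega
    have hcp : p.choose (i + 2) = 1 := by rw [hip]; exact Nat.choose_self p
    rw [hcp]
    have : t ^ (i + 2) = q ^ (i + 2) * d ^ (i + 2) := by rw [ht]; ring
    rw [Nat.cast_one, mul_one, this]
    have hsplit : q ^ (i + 2) = q ^ i * q * q := by ring
    rw [hsplit]
    obtain ⟨r, hr⟩ := hq
    have hi0 : 1 ≤ i := by omega
    have hqi : (p : R) ∣ q ^ i := hr ▸ dvd_pow (Dvd.intro r rfl) (by omega)
    obtain ⟨s, hs⟩ := hqi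
    exact ⟨s * d ^ (i + 2), by rw [hs]; ring⟩

private lemma lemC {R : Type*} [CommRing R] {p : ℕ} (hp : p.Prime) (hp2 : p ≠ 2)
    (c : R) (v : ℕ) :
    ∃ d : R, (1 + p * c) ^ p ^ v = 1 + (p : R) ^ (v + 1) * d ∧ (p : R) ∣ d - c := by
  induction v with
  | zero => exact ⟨c, by simp, by simp⟩
  | succ v ih =>
    obtain ⟨d, hd, hdc⟩ := ih
    obtain ⟨e, he⟩ := lemA hp hp2 ((p : R) ^ (v + 1)) d ⟨(p : R) ^ v, by ring⟩
    refine ⟨d + (p : R) ^ (v + 1) * e, ?_, ?_⟩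
    · rw [pow_succ, pow_mul, hd, he]
      ring
    · obtain ⟨r, hr⟩ := hdc
      exact ⟨r + (p : R) ^ v * e, by linear_combination hr⟩

theorem padic_pow_sub_one_div (p : ℕ) [Fact p.Prime] (hp2 : p ≠ 2)
    (a : ℤ_[p]) (ha : ¬ (p : ℤ_[p]) ∣ a) (n : ℕ) (hn : 0 < n) :
    ∃ b c : ℤ_[p],
      a ^ ((p - 1) * n) - 1 = (p : ℤ_[p]) * (n : ℤ_[p]) * b ∧
      a ^ (p - 1) - 1 = (p : ℤ_[p]) * c ∧
      (p : ℤ_[p]) ∣ b - c := by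
  have hp : p.Prime := Fact.out
  have hmem : ∀ x : ℤ_[p], (p : ℤ_[p]) ∣ x ↔ PadicInt.toZMod x = 0 := by
    intro x
    rw [← Ideal.mem_span_singleton, ← PadicInt.maximalIdeal_eq_span_p,
      ← PadicInt.ker_toZMod, RingHom.mem_ker]
  have h0 : PadicInt.toZMod a ≠ 0 := fun h => ha ((hmem a).mpr h)
  have hFermat : (p : ℤ_[p]) ∣ a ^ (p - 1) - 1 := by
    rw [hmem, map_sub, map_pow, map_one, ZMod.pow_card_sub_one_eq_one h0, sub_self]
  obtain ⟨c, hc⟩ := hFermat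
  have hx : a ^ (p - 1) = 1 + p * c := by linear_combination hc
  set v := n.factorization p with hv
  set m := n / p ^ v with hm
  have hnm : p ^ v * m = n := Nat.ordProj_mul_ordCompl_eq_self n p
  have hpm : ¬ p ∣ m := Nat.not_dvd_ordCompl hp (by omega)
  obtain ⟨d, hd, hdc⟩ := lemC (R := ℤ_[p]) hp hp2 c v
  obtain ⟨F, hF⟩ := lemB ((p : ℤ_[p]) ^ (v + 1) * d) m
  have hum : IsUnit (m : ℤ_[p]) := by
    rw [PadicInt.isUnit_iff]
    by_contra h
    have hlt : ‖((m : ℤ) : ℤ_[p])‖ < 1 := by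
      push_cast
      exact lt_of_le_of_ne (PadicInt.norm_le_one _) h
    have := (PadicInt.norm_int_lt_one_iff_dvd (m : ℤ)).mp hlt
    exact hpm (Int.ofNat_dvd.mp this)
  obtain ⟨u, hu⟩ := hum
  have hmu : (m : ℤ_[p]) * ↑u⁻¹ = 1 := by
    rw [← hu, Units.mul_inv]
  refine ⟨d + (p : ℤ_[p]) ^ (v + 1) * d ^ 2 * F * ↑u⁻¹, c, ?_, hc, ?_⟩
  · have key : a ^ ((p - 1) * n) =
        1 + (m : ℤ_[p]) * ((p : ℤ_[p]) ^ (v + 1) * d) +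
          ((p : ℤ_[p]) ^ (v + 1) * d) ^ 2 * F := by
      rw [pow_mul, hx, ← hnm, pow_mul, hd, hF]
    have hn' : (n : ℤ_[p]) = (p : ℤ_[p]) ^ v * m := by
      rw [← hnm]; push_cast; ring
    rw [key, hn']
    linear_combination (-((p : ℤ_[p]) ^ (v + 1)) ^ 2 * d ^ 2 * F) * hmu
  · obtain ⟨r, hr⟩ := hdc
    exact ⟨r + (p : ℤ_[p]) ^ v * d ^ 2 * F * ↑u⁻¹, by linear_combination hr⟩
end

section
/- For any integer m and positive integer n, ∑_{r=0}^{n−1} C(2n, r)·u_{n−r}(m−2, 1) = ∑_{k=0}^{n−1} C(2k, k)·m^{n−1−k}. -/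
lemma mu (m : ℤ) (k : ℕ) :
    m * lucasU (m-2) 1 (k+1) = lucasU (m-2) 1 (k+2) + 2 * lucasU (m-2) 1 (k+1) + lucasU (m-2) 1 k := by
  rw [show k+2 = (k+1)+1 from rfl]
  simp [lucasU]
  ring

lemma pascal2 (N r : ℕ) : (N+2).choose (r+2) = N.choose (r+2) + 2*(N.choose (r+1)) + N.choose r := by
  simp [Nat.choose_succ_succ]
  ring

lemma key (m : ℤ) (t : ℕ) :
    ∑ r ∈ Finset.range (t+2), ((2*t+4).choose r : ℤ) * lucasU (m-2) 1 (t+2-r)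
      = m * ∑ r ∈ Finset.range (t+1), ((2*t+2).choose r : ℤ) * lucasU (m-2) 1 (t+1-r)
        + (2*t+2).choose (t+1) := by
  set u := lucasU (m-2) 1 with hu
  rw [Finset.mul_sum]
  have step1 : ∀ r ∈ Finset.range (t+1),
      m * (((2*t+2).choose r : ℤ) * u (t+1-r))
        = ((2*t+2).choose r : ℤ) * u (t+2-r)
          + 2*(((2*t+2).choose r : ℤ) * u (t+1-r))
          + ((2*t+2).choose r : ℤ) * u (t-r) := by
    intro r hr
    have hr' := Finset.mem_range.mp hr
    have h1 : t+1-r = (t-r)+1 := by omega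
    have h2 : t+2-r = (t-r)+2 := by omega
    rw [h1, h2]
    have h3 := mu m (t-r)
    rw [← hu] at h3
    rw [mul_comm m, mul_assoc, mul_comm _ m, h3]
    ring
  rw [Finset.sum_congr rfl step1, Finset.sum_add_distrib, Finset.sum_add_distrib]
  have hSA : (∑ r ∈ Finset.range (t+1), ((2*t+2).choose r : ℤ) * u (t+2-r))
      + ((2*t+2).choose (t+1) : ℤ)
      = ∑ r ∈ Finset.range (t+2), ((2*t+2).choose r : ℤ) * u (t+2-r) := by
    have h1 : t+2-(t+1) = 1 := by omega
    have h2 : u 1 = 1 := by rw [hu]; rfl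
    conv_rhs => rw [Finset.sum_range_succ]
    rw [h1, h2, mul_one]
  have peel : ∀ (c : ℕ → ℤ), ∑ r ∈ Finset.range (t+2), c r * u (t+2-r)
      = c 0 * u (t+2) + c 1 * u (t+1) + ∑ r ∈ Finset.range t, c (r+2) * u (t-r) := by
    intro c
    rw [Finset.sum_range_succ', Finset.sum_range_succ']
    have e1 : ∀ i ∈ Finset.range t, c (i+1+1) * u (t+2-(i+1+1)) = c (i+2) * u (t-i) := by
      intro i hi
      have : t+2-(i+1+1) = t - i := by omega
      rw [this]
    rw [Finset.sum_congr rfl e1]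
    have : t+2-(0+1) = t+1 := by omega
    rw [this]
    have : t+2-0 = t+2 := by omega
    rw [this]
    ring
  have hB : ∑ r ∈ Finset.range (t+1), 2*(((2*t+2).choose r : ℤ) * u (t+1-r))
      = 2*u (t+1) + ∑ r ∈ Finset.range t, 2*(((2*t+2).choose (r+1) : ℤ) * u (t-r)) := by
    rw [Finset.sum_range_succ']
    have e1 : ∀ i ∈ Finset.range t, 2*(((2*t+2).choose (i+1) : ℤ) * u (t+1-(i+1)))
        = 2*(((2*t+2).choose (i+1) : ℤ) * u (t-i)) := by
      intro i hi
      have : t+1-(i+1) = t - i := by omega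
      rw [this]
    rw [Finset.sum_congr rfl e1]
    have : t+1-0 = t+1 := by omega
    rw [this]
    simp
    ring
  have hC : ∑ r ∈ Finset.range (t+1), ((2*t+2).choose r : ℤ) * u (t-r)
      = ∑ r ∈ Finset.range t, ((2*t+2).choose r : ℤ) * u (t-r) := by
    rw [Finset.sum_range_succ]
    have h1 : t - t = 0 := by omega
    have h2 : u 0 = 0 := by rw [hu]; rfl
    rw [h1, h2, mul_zero, add_zero]
  have tail : ∑ r ∈ Finset.range t, ((2*t+4).choose (r+2) : ℤ) * u (t-r)
      = ∑ r ∈ Finset.range t, (((2*t+2).choose (r+2) : ℤ) * u (t-r)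
          + 2*(((2*t+2).choose (r+1) : ℤ) * u (t-r))
          + ((2*t+2).choose r : ℤ) * u (t-r)) := by
    refine Finset.sum_congr rfl (fun r hr => ?_)
    have h1 : 2*t+4 = (2*t+2)+2 := by omega
    rw [h1, pascal2]
    push_cast
    ring
  rw [peel]
  rw [peel] at hSA
  rw [hB, hC, tail, Finset.sum_add_distrib, Finset.sum_add_distrib]
  simp only [Nat.choose_zero_right, Nat.choose_one_right] at hSA ⊢
  push_cast at hSA ⊢
  linarith [hSA]

lemma aux (m : ℤ) : ∀ n : ℕ,
    ∑ r ∈ Finset.range n, (Nat.choose (2 * n) r : ℤ) * lucasU (m - 2) 1 (n - r)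
      = ∑ k ∈ Finset.range n, (Nat.choose (2 * k) k : ℤ) * m ^ (n - 1 - k)
  | 0 => by simp
  | 1 => by simp [lucasU]
  | (s+2) => by
    have e1 : ∀ r ∈ Finset.range (s+2),
        (Nat.choose (2*(s+2)) r : ℤ) * lucasU (m-2) 1 (s+2-r)
          = ((2*s+4).choose r : ℤ) * lucasU (m-2) 1 (s+2-r) := by
      intro r hr
      have : 2*(s+2) = 2*s+4 := by omega
      rw [this]
    rw [Finset.sum_congr rfl e1, key]
    have ih := aux m (s+1)
    have e2 : ∀ r ∈ Finset.range (s+1),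
        (Nat.choose (2*(s+1)) r : ℤ) * lucasU (m-2) 1 (s+1-r)
          = ((2*s+2).choose r : ℤ) * lucasU (m-2) 1 (s+1-r) := by
      intro r hr
      have : 2*(s+1) = 2*s+2 := by omega
      rw [this]
    rw [Finset.sum_congr rfl e2] at ih
    rw [ih, Finset.mul_sum]
    rw [Finset.sum_range_succ (fun k => (Nat.choose (2*k) k : ℤ) * m ^ (s+2-1-k))]
    have e3 : ∀ k ∈ Finset.range (s+1),
        m * ((Nat.choose (2*k) k : ℤ) * m ^ (s+1-1-k))
          = (Nat.choose (2*k) k : ℤ) * m ^ (s+2-1-k) := by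
      intro k hk
      have hk' := Finset.mem_range.mp hk
      have h1 : s+1-1-k = s-k := by omega
      have h2 : s+2-1-k = (s-k)+1 := by omega
      rw [h1, h2, pow_succ]
      ring
    rw [Finset.sum_congr rfl e3]
    have h3 : s+2-1-(s+1) = 0 := by omega
    have h4 : 2*(s+1) = 2*s+2 := by omega
    rw [h3, h4, pow_zero, mul_one]

theorem sum_choose_lucasU (m : ℤ) (n : ℕ) (hn : 0 < n) :
    ∑ r ∈ Finset.range n, (Nat.choose (2 * n) r : ℤ) * lucasU (m - 2) 1 (n - r)
      = ∑ k ∈ Finset.range n, (Nat.choose (2 * k) k : ℤ) * m ^ (n - 1 - k) :=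
  aux m n
end

section
/- For any integer m and positive integer n, ∑_{r=0}^{n−1} C(2n, r)·v_{n−r}(m−2, 1) = m^n − C(2n, n). -/
open Finset

def al (A : ℤ) : ℤ√(A^2-4) := ⟨A, 1⟩
def be (A : ℤ) : ℤ√(A^2-4) := ⟨A, -1⟩

lemma albe (A : ℤ) : al A * be A = 4 := by
  simp [Zsqrtd.ext_iff, al, be, Zsqrtd.re_mul, Zsqrtd.im_mul]; ring_nf

lemma al_sq (A : ℤ) : al A ^ 2 = 2 * (A : ℤ√(A^2-4)) * al A - 4 := by
  simp [Zsqrtd.ext_iff, al, Zsqrtd.re_mul, Zsqrtd.im_mul, pow_two]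
  constructor <;> ring

lemma be_sq (A : ℤ) : be A ^ 2 = 2 * (A : ℤ√(A^2-4)) * be A - 4 := by
  simp [Zsqrtd.ext_iff, be, Zsqrtd.re_mul, Zsqrtd.im_mul, pow_two]
  constructor <;> ring

lemma be_mul (A : ℤ) : be A * (2 + al A)^2 = 8 * ((A : ℤ√(A^2-4)) + 2) := by
  simp [Zsqrtd.ext_iff, al, be, Zsqrtd.re_mul, Zsqrtd.im_mul, pow_two]
  constructor <;> ring

lemma key_s12 (A : ℤ) : ∀ k : ℕ,
    al A ^ k + be A ^ k = 2 ^ k * ((lucasV A 1 k : ℤ) : ℤ√(A^2-4)) := by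
  intro k
  induction k using Nat.twoStepInduction with
  | zero => simp [lucasV]; norm_num
  | one => simp [lucasV, al, be, Zsqrtd.ext_iff]; ring_nf
  | more k ih1 ih2 =>
    have ha : al A ^ (k+2) = 2 * (A : ℤ√(A^2-4)) * al A ^ (k+1) - 4 * al A ^ k := by
      have : al A ^ (k+2) = al A ^ k * al A ^ 2 := by ring
      rw [this, al_sq]; ring
    have hb : be A ^ (k+2) = 2 * (A : ℤ√(A^2-4)) * be A ^ (k+1) - 4 * be A ^ k := by
      have : be A ^ (k+2) = be A ^ k * be A ^ 2 := by ring
      rw [this, be_sq]; ring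
    rw [ha, hb]
    have hv : lucasV A 1 (k+2) = A * lucasV A 1 (k+1) - 1 * lucasV A 1 k := rfl
    rw [hv]
    push_cast
    linear_combination (2*(A : ℤ√(A^2-4))) * ih2 - 4 * ih1

lemma term_id (A : ℤ) (n r : ℕ) (hr : r < n) :
    be A ^ n * (2 ^ r * al A ^ (2*n - r) * ((2*n).choose r : ℤ√(A^2-4)))
      + be A ^ n * (2 ^ (2*n - r) * al A ^ (2*n - (2*n - r)) * ((2*n).choose (2*n - r) : ℤ√(A^2-4)))
      = ((2*n).choose r : ℤ√(A^2-4)) * (2 ^ (2*n + r) * (al A ^ (n - r) + be A ^ (n - r))) := by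
  obtain ⟨k, rfl⟩ : ∃ k, n = r + k := ⟨n - r, by omega⟩
  have h1 : 2*(r+k) - r = r + 2*k := by omega
  have h2 : 2*(r+k) - (r + 2*k) = r := by omega
  have h3 : (r+k) - r = k := by omega
  rw [h1, h2, h3]
  have hsymm : (2*(r+k)).choose (r + 2*k) = (2*(r+k)).choose r := by
    rw [show r + 2*k = 2*(r+k) - r by omega]
    exact Nat.choose_symm (by omega)
  rw [hsymm]
  have h4 : (4 : ℤ√(A^2-4)) = 2^2 := by norm_num
  have e1 : be A ^ (r+k) * al A ^ (r+2*k) = 2 ^ (2*(r+k)) * al A ^ k := by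
    have h5 : be A ^ (r+k) * al A ^ (r+2*k) = (al A * be A)^(r+k) * al A ^ k := by
      rw [mul_pow]; ring
    rw [h5, albe, h4, ← pow_mul]
  have e2 : be A ^ (r+k) * al A ^ r = 2 ^ (2*r) * be A ^ k := by
    have h5 : be A ^ (r+k) * al A ^ r = (al A * be A)^r * be A ^ k := by
      rw [mul_pow]; ring
    rw [h5, albe, h4, ← pow_mul]
  linear_combination (((2*(r+k)).choose r : ℤ√(A^2-4)) * 2^r) * e1
    + (((2*(r+k)).choose r : ℤ√(A^2-4)) * 2^(r+2*k)) * e2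

lemma main_id (A : ℤ) (n : ℕ) :
    ∑ r ∈ range n, ((2*n).choose r : ℤ√(A^2-4)) * (2 ^ (2*n + r) * (al A ^ (n - r) + be A ^ (n - r)))
      + 2 ^ (3*n) * ((2*n).choose n : ℤ√(A^2-4))
      = be A ^ n * (2 + al A) ^ (2*n) := by
  rw [add_pow, Finset.mul_sum]
  set h : ℕ → ℤ√(A^2-4) :=
    fun r => be A ^ n * (2 ^ r * al A ^ (2*n - r) * ((2*n).choose r : ℤ√(A^2-4))) with hh
  have hsplit : ∑ r ∈ range (2*n+1), h r
      = (∑ r ∈ range n, h r + h n) + ∑ r ∈ Ico (n+1) (2*n+1), h r := by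
    rw [range_eq_Ico, ← Finset.sum_Ico_consecutive h (Nat.zero_le (n+1)) (by omega),
      ← range_eq_Ico, Finset.sum_range_succ]
  have hrefl : ∑ r ∈ Ico (n+1) (2*n+1), h r = ∑ r ∈ range n, h (2*n - r) := by
    have := Finset.sum_Ico_reflect h 0 (show n ≤ 2*n + 1 by omega)
    rw [show 2*n+1-n = n+1 by omega, Nat.sub_zero] at this
    rw [← this, range_eq_Ico]
  have hn : h n = 2 ^ (3*n) * ((2*n).choose n : ℤ√(A^2-4)) := by
    rw [hh]
    simp only [show 2*n - n = n by omega]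
    have h4 : (4 : ℤ√(A^2-4)) = 2^2 := by norm_num
    have : be A ^ n * al A ^ n = 2 ^ (2*n) := by
      rw [← mul_pow, mul_comm (be A) (al A), albe, h4, ← pow_mul]
    calc be A ^ n * (2 ^ n * al A ^ n * ((2*n).choose n : ℤ√(A^2-4)))
        = (be A ^ n * al A ^ n) * 2 ^ n * ((2*n).choose n : ℤ√(A^2-4)) := by ring
      _ = 2 ^ (3*n) * ((2*n).choose n : ℤ√(A^2-4)) := by
          rw [this, ← pow_add, show 2*n + n = 3*n by omega]
  have hsum : ∑ r ∈ range n, (h r + h (2*n - r))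
      = ∑ r ∈ range n, ((2*n).choose r : ℤ√(A^2-4))
          * (2 ^ (2*n + r) * (al A ^ (n - r) + be A ^ (n - r))) :=
    Finset.sum_congr rfl (fun r hr => by rw [hh]; exact term_id A n r (Finset.mem_range.mp hr))
  rw [hsplit, hrefl, hn, ← hsum, Finset.sum_add_distrib]
  ring

theorem sum_choose_lucasV (m : ℤ) (n : ℕ) (hn : 0 < n) :
    ∑ r ∈ Finset.range n, (Nat.choose (2 * n) r : ℤ) * lucasV (m - 2) 1 (n - r)
      = m ^ n - (Nat.choose (2 * n) n : ℤ) := by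
  obtain ⟨A, rfl⟩ : ∃ A, m = A + 2 := ⟨m - 2, by ring⟩
  simp only [add_sub_cancel_right]
  apply mul_left_cancel₀ (a := (8:ℤ)^n) (pow_ne_zero _ (by norm_num))
  apply Int.cast_injective (α := ℤ√(A^2-4))
  push_cast [Finset.mul_sum]
  have hterm : ∀ r ∈ range n,
      (8 : ℤ√(A^2-4))^n * (((2*n).choose r : ℤ√(A^2-4)) * ((lucasV A 1 (n-r) : ℤ) : ℤ√(A^2-4)))
        = ((2*n).choose r : ℤ√(A^2-4)) * (2 ^ (2*n + r) * (al A ^ (n - r) + be A ^ (n - r))) := by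
    intro r hr
    have hr' := Finset.mem_range.mp hr
    rw [key_s12 A (n - r)]
    have h8n : (8 : ℤ√(A^2-4))^n = 2^(3*n) := by
      rw [show (8 : ℤ√(A^2-4)) = 2^3 by norm_num, ← pow_mul]
    have hp : (2 : ℤ√(A^2-4))^(2*n + r) * 2^(n - r) = 2^(3*n) := by
      rw [← pow_add]; congr 1; omega
    rw [h8n]
    linear_combination (-(((2*n).choose r : ℤ√(A^2-4))
      * ((lucasV A 1 (n - r) : ℤ) : ℤ√(A^2-4)))) * hp
  rw [Finset.sum_congr rfl hterm]
  have hRHS : (8 : ℤ√(A^2-4))^n * (((A : ℤ√(A^2-4)) + 2)^n - ((2*n).choose n : ℤ√(A^2-4)))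
      = be A ^ n * (2 + al A) ^ (2*n) - 2 ^ (3*n) * ((2*n).choose n : ℤ√(A^2-4)) := by
    have hbm : be A ^ n * (2 + al A) ^ (2*n) = (be A * (2 + al A)^2)^n := by
      rw [mul_pow, ← pow_mul]
    have h8n : (8 : ℤ√(A^2-4))^n = 2^(3*n) := by
      rw [show (8 : ℤ√(A^2-4)) = 2^3 by norm_num, ← pow_mul]
    rw [hbm, be_mul, mul_pow, h8n]
    ring
  rw [hRHS, ← main_id A n]
  ring
end

section
/- For any integer m and positive integer n, 2·∑_{r=0}^{n−1} C(2n−1, r)·u_{n−r}(m−2, 1) = ∑_{k=0}^{n−1} C(2k, k)·m^{n−1−k} + m^{n−1}. -/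
lemma key_u (m : ℤ) (j : ℕ) :
    m * lucasU (m - 2) 1 (j + 1)
      = lucasU (m - 2) 1 (j + 2) + 2 * lucasU (m - 2) 1 (j + 1) + lucasU (m - 2) 1 j := by
  rw [show lucasU (m-2) 1 (j+2) = (m-2) * lucasU (m-2) 1 (j+1) - 1 * lucasU (m-2) 1 j from rfl]
  ring

lemma choose_split (N j : ℕ) :
    ((2*N+3).choose (N+2+j) : ℤ)
      = (2*N+1).choose (N+j) + 2 * (2*N+1).choose (N+1+j) + (2*N+1).choose (N+2+j) := by
  have h : (((2*N+1)+1)+1).choose (((N+j)+1)+1)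
      = ((2*N+1).choose (N+j) + (2*N+1).choose ((N+j)+1))
        + ((2*N+1).choose ((N+j)+1) + (2*N+1).choose (((N+j)+1)+1)) := by
    rw [Nat.choose_succ_succ ((2*N+1)+1) ((N+j)+1), Nat.choose_succ_succ (2*N+1) (N+j),
      Nat.choose_succ_succ (2*N+1) ((N+j)+1)]
  rw [show (2*N+3) = ((2*N+1)+1)+1 by omega, show N+2+j = ((N+j)+1)+1 by omega,
    show N+1+j = (N+j)+1 by omega, h]
  push_cast; ring

lemma step_T (m : ℤ) (N : ℕ) :
    ∑ j ∈ Finset.range (N+2), ((2*N+3).choose (N+2+j) : ℤ) * lucasU (m-2) 1 (j+1)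
      = m * ∑ j ∈ Finset.range (N+1), ((2*N+1).choose (N+1+j) : ℤ) * lucasU (m-2) 1 (j+1)
        + (2*N+1).choose (N+1) := by
  set u := lucasU (m-2) 1 with hu
  rw [Finset.mul_sum]
  have hterm : ∀ j : ℕ, m * (((2*N+1).choose (N+1+j) : ℤ) * u (j+1))
      = ((2*N+1).choose (N+1+j) : ℤ) * u (j+2)
        + ((2*N+1).choose (N+1+j) : ℤ) * (2 * u (j+1))
        + ((2*N+1).choose (N+1+j) : ℤ) * u j := by
    intro j
    rw [mul_left_comm, hu, key_u]
    ring
  simp_rw [hterm]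
  rw [Finset.sum_add_distrib, Finset.sum_add_distrib]
  simp_rw [choose_split, add_mul]
  rw [Finset.sum_add_distrib, Finset.sum_add_distrib]
  have hA : ∑ j ∈ Finset.range (N+2), ((2*N+1).choose (N+j) : ℤ) * u (j+1)
      = (∑ j ∈ Finset.range (N+1), ((2*N+1).choose (N+1+j) : ℤ) * u (j+2))
        + (2*N+1).choose N := by
    rw [Finset.sum_range_succ' (fun j => ((2*N+1).choose (N+j) : ℤ) * u (j+1)) (N+1)]
    congr 1
    · apply Finset.sum_congr rfl
      intro j _
      have h1 : N+(j+1) = N+1+j := by omega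
      have h2 : j+1+1 = j+2 := by omega
      rw [h1, h2]
    · show ((2*N+1).choose (N+0) : ℤ) * u 1 = _
      rw [show u 1 = 1 from rfl, mul_one]
      norm_num
  have hB : ∑ j ∈ Finset.range (N+2), 2 * ((2*N+1).choose (N+1+j) : ℤ) * u (j+1)
      = ∑ j ∈ Finset.range (N+1), ((2*N+1).choose (N+1+j) : ℤ) * (2 * u (j+1)) := by
    rw [Finset.sum_range_succ]
    rw [show (2*N+1).choose (N+1+(N+1)) = 0 from Nat.choose_eq_zero_of_lt (by omega)]
    push_cast
    rw [zero_mul, add_zero]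
    apply Finset.sum_congr rfl
    intro j _; ring
  have hC : ∑ j ∈ Finset.range (N+2), ((2*N+1).choose (N+2+j) : ℤ) * u (j+1)
      = ∑ j ∈ Finset.range (N+1), ((2*N+1).choose (N+1+j) : ℤ) * u j := by
    rw [Finset.sum_range_succ, Finset.sum_range_succ]
    rw [show (2*N+1).choose (N+2+(N+1)) = 0 from Nat.choose_eq_zero_of_lt (by omega),
        show (2*N+1).choose (N+2+N) = 0 from Nat.choose_eq_zero_of_lt (by omega)]
    push_cast
    rw [zero_mul, zero_mul, add_zero, add_zero]
    rw [Finset.sum_range_succ' (fun j => ((2*N+1).choose (N+1+j) : ℤ) * u j) N]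
    rw [show u 0 = 0 from rfl, mul_zero, add_zero]
    apply Finset.sum_congr rfl
    intro j _
    have h1 : N+1+(j+1) = N+2+j := by omega
    rw [h1]
  rw [hA, hB, hC]
  have hsym : ((2*N+1).choose N : ℤ) = (2*N+1).choose (N+1) := by
    exact_mod_cast (Nat.choose_symm_half N).symm
  rw [hsym]; ring

lemma convert_sum (m : ℤ) (N : ℕ) :
    ∑ r ∈ Finset.range (N+1), ((2*(N+1)-1).choose r : ℤ) * lucasU (m-2) 1 ((N+1)-r)
      = ∑ j ∈ Finset.range (N+1), ((2*N+1).choose (N+1+j) : ℤ) * lucasU (m-2) 1 (j+1) := by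
  rw [← Finset.sum_range_reflect
    (fun j => ((2*N+1).choose (N+1+j) : ℤ) * lucasU (m-2) 1 (j+1)) (N+1)]
  apply Finset.sum_congr rfl
  intro r hr
  rw [Finset.mem_range] at hr
  have h1 : N+1+(N+1-1-r) = 2*N+1-r := by omega
  have h2 : N+1-1-r+1 = N+1-r := by omega
  have h3 : 2*(N+1)-1 = 2*N+1 := by omega
  rw [h1, h2, h3, Nat.choose_symm (by omega : r ≤ 2*N+1)]

lemma Rstep (m : ℤ) (N : ℕ) :
    (∑ k ∈ Finset.range (N+1+1), ((2*k).choose k : ℤ) * m^(N+1-k)) + m^(N+1)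
      = m * ((∑ k ∈ Finset.range (N+1), ((2*k).choose k : ℤ) * m^(N-k)) + m^N)
        + (2*(N+1)).choose (N+1) := by
  rw [Finset.sum_range_succ]
  have hS : ∀ k ∈ Finset.range (N+1),
      ((2*k).choose k : ℤ) * m^(N+1-k) = m * (((2*k).choose k : ℤ) * m^(N-k)) := by
    intro k hk
    rw [Finset.mem_range] at hk
    have : N+1-k = (N-k)+1 := by omega
    rw [this, pow_succ]; ring
  rw [Finset.sum_congr rfl hS, show N+1-(N+1) = 0 by omega, ← Finset.mul_sum]
  ring

lemma main_aux (m : ℤ) (N : ℕ) :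
    2 * ∑ j ∈ Finset.range (N+1), ((2*N+1).choose (N+1+j) : ℤ) * lucasU (m-2) 1 (j+1)
      = (∑ k ∈ Finset.range (N+1), ((2*k).choose k : ℤ) * m^(N-k)) + m^N := by
  induction N with
  | zero => norm_num [lucasU]
  | succ N ih =>
    have hstep := step_T m N
    have hgoal : ∑ j ∈ Finset.range (N+1+1), ((2*(N+1)+1).choose (N+1+1+j) : ℤ)
        * lucasU (m-2) 1 (j+1)
        = ∑ j ∈ Finset.range (N+2), ((2*N+3).choose (N+2+j) : ℤ) * lucasU (m-2) 1 (j+1) := by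
      apply Finset.sum_congr (by norm_num)
      intro j _
      have e1 : 2*(N+1)+1 = 2*N+3 := by omega
      have e2 : N+1+1+j = N+2+j := by omega
      rw [e1, e2]
    rw [hgoal, hstep, Rstep, mul_add, ← ih]
    have h2 : (2 : ℤ) * ((2*N+1).choose (N+1)) = (2*(N+1)).choose (N+1) := by
      have := Nat.add_one_mul_choose_eq (2*N+1) N
      have hh : (2*(N+1)).choose (N+1) = (2*N+1).choose N + (2*N+1).choose (N+1) := by
        rw [show 2*(N+1) = (2*N+1)+1 by omega, show (N+1) = N+1 from rfl,
          Nat.choose_succ_succ (2*N+1) N]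
      rw [hh, ← Nat.choose_symm_half N]
      push_cast; ring
    rw [← h2]
    ring

theorem sum_choose_lucasU' (m : ℤ) (n : ℕ) (hn : 0 < n) :
    2 * ∑ r ∈ Finset.range n, (Nat.choose (2 * n - 1) r : ℤ) * lucasU (m - 2) 1 (n - r)
      = (∑ k ∈ Finset.range n, (Nat.choose (2 * k) k : ℤ) * m ^ (n - 1 - k)) + m ^ (n - 1) := by
  obtain ⟨N, rfl⟩ : ∃ N, n = N + 1 := ⟨n - 1, by omega⟩
  rw [convert_sum, main_aux]
  simp only [Nat.add_sub_cancel]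
end

section
/- For every positive integer n, ∑_{r=0}^{n−1} (3r+1)·C_r = C(2n, n) − 1, where C_r = C(2r, r)/(r+1) is the r-th Catalan number. -/
lemma step_catalan (n : ℕ) :
    (3 * n + 1) * catalan n + Nat.centralBinom n = Nat.centralBinom (n + 1) := by
  have h := succ_mul_catalan_eq_centralBinom n
  have h2 := Nat.succ_mul_centralBinom_succ n
  have := Nat.succ_ne_zero n
  apply Nat.eq_of_mul_eq_mul_left (Nat.succ_pos n)
  calc (n + 1) * ((3 * n + 1) * catalan n + Nat.centralBinom n)
      = (3 * n + 1) * ((n + 1) * catalan n) + (n + 1) * Nat.centralBinom n := by ring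
    _ = (3 * n + 1) * Nat.centralBinom n + (n + 1) * Nat.centralBinom n := by rw [h]
    _ = 2 * (2 * n + 1) * Nat.centralBinom n := by ring
    _ = (n + 1) * Nat.centralBinom (n + 1) := h2.symm

theorem sum_catalan_eq (n : ℕ) (hn : 0 < n) :
    ∑ r ∈ Finset.range n, (3 * r + 1) * catalan r = Nat.choose (2 * n) n - 1 := by
  have key : ∀ m : ℕ, ∑ r ∈ Finset.range m, (3 * r + 1) * catalan r
      = Nat.centralBinom m - 1 := by
    intro m
    induction m with
    | zero => simp [Nat.centralBinom]
    | succ k ih =>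
      rw [Finset.sum_range_succ, ih]
      have hpos := Nat.centralBinom_pos k
      have hstep := step_catalan k
      omega
  rw [key n, Nat.centralBinom]
end

section
/- Let p > 3 be a prime and let n ≥ k ≥ 0 be integers. Then C(pn, pk)/C(n, k) ≡ 1 (mod p³·n·k·(n−k)) in the p-adic integers, i.e., C(pn,pk) ∈ C(n,k)·(1 + p³nk(n−k)ℤ_p). -/
open Finset Nat

namespace JK
variable (p : ℕ)

/-- product over (0, p*t] of j, skipping multiples of p -/
def A (t : ℕ) : ℕ := ∏ j ∈ Ioc 0 (p*t), (if p ∣ j then 1 else j)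

lemma prod_Ioc_id (n : ℕ) : (∏ x ∈ Ioc 0 n, x) = n ! := by
  induction n with
  | zero => simp
  | succ n ih => rw [prod_Ioc_succ_top (Nat.zero_le _), ih, Nat.factorial_succ, mul_comm]

lemma block_prod (hpp : 2 ≤ p) (a : ℕ) :
    (∏ j ∈ Ioc (p*a) (p*a+p), (if p ∣ j then 1 else j)) * (p*(a+1))
      = ∏ j ∈ Ioc (p*a) (p*a+p), j := by
  have h1 : p*a + p = (p*a + (p-1)) + 1 := by omega
  have h2 : p*a ≤ p*a + (p-1) := by omega
  rw [h1, prod_Ioc_succ_top h2, prod_Ioc_succ_top h2]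
  have h3 : p ∣ p*a + (p-1) + 1 := by
    have : p*a + (p-1) + 1 = p*(a+1) := by rw [Nat.mul_succ]; omega
    rw [this]; exact ⟨a+1, rfl⟩
  rw [if_pos h3]
  have h4 : ∀ j ∈ Ioc (p*a) (p*a + (p-1)), (if p ∣ j then 1 else j) = j := by
    intro j hj
    simp only [mem_Ioc] at hj
    rw [if_neg]
    rintro ⟨c, rfl⟩
    have hac : a < c := Nat.lt_of_mul_lt_mul_left (a := p) hj.1
    have h5 : p*(a+1) ≤ p*c := Nat.mul_le_mul_left p hac
    rw [Nat.mul_succ] at h5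
    omega
  rw [prod_congr rfl h4]
  have h6 : p*a + (p-1) + 1 = p*(a+1) := by rw [Nat.mul_succ]; omega
  rw [h6]; ring

lemma fact_eq (hpp : 2 ≤ p) : ∀ t : ℕ, (p*t)! = p^t * t ! * A p t := by
  intro t
  induction t with
  | zero => simp [A]
  | succ t ih =>
      have hle : p * t ≤ p * (t+1) := Nat.mul_le_mul_left p (by omega)
      have e1 : (p*(t+1))! = (p*t)! * ∏ j ∈ Ioc (p*t) (p*(t+1)), j := by
        rw [← prod_Ioc_id, ← prod_Ioc_id,
          prod_Ioc_consecutive _ (Nat.zero_le _) hle]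
      have e2 : A p (t+1) = A p t * ∏ j ∈ Ioc (p*t) (p*(t+1)), (if p ∣ j then 1 else j) := by
        rw [A, A, ← prod_Ioc_consecutive (fun j => if p ∣ j then 1 else j) (Nat.zero_le _) hle]
      have e3 := block_prod p hpp t
      have hps : p*(t+1) = p*t + p := by rw [Nat.mul_succ]
      rw [hps] at e1 e2 ⊢
      rw [e1, ih, e2, ← e3, Nat.factorial_succ]
      ring

lemma A_add (m k : ℕ) :
    A p (m + k) = A p m * ∏ j ∈ Ioc 0 (p*k), (if p ∣ j then 1 else (p*m + j)) := by
  have hle : p * m ≤ p * (m+k) := Nat.mul_le_mul_left p (by omega)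
  rw [A, A, ← prod_Ioc_consecutive (fun j => if p ∣ j then 1 else j) (Nat.zero_le _) hle]
  congr 1
  have hmap : Ioc (p*m) (p*(m+k)) = map (addLeftEmbedding (p*m)) (Ioc 0 (p*k)) := by
    rw [map_add_left_Ioc]; congr 1 <;> ring
  rw [hmap, prod_map]
  apply prod_congr rfl
  intro j hj
  simp only [addLeftEmbedding_apply]
  congr 1
  simp [Nat.dvd_add_right (Dvd.intro m rfl)]


lemma map_ringInverse {R S : Type*} [CommRing R] [CommRing S] (f : R →+* S) (a : R)
    (h : IsUnit a) : f (Ring.inverse a) = Ring.inverse (f a) := by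
  have h2 : IsUnit (f a) := h.map f
  have h3 : f a * f (Ring.inverse a) = 1 := by
    rw [← map_mul, Ring.mul_inverse_cancel a h, map_one]
  calc f (Ring.inverse a) = Ring.inverse (f a) * (f a * f (Ring.inverse a)) := by
        rw [← mul_assoc, Ring.inverse_mul_cancel _ h2, one_mul]
    _ = Ring.inverse (f a) := by rw [h3, mul_one]

variable {p : ℕ} [hp : Fact p.Prime]

lemma coprime_pow {j : ℕ} (s : ℕ) (h : ¬ p ∣ j) : Nat.Coprime j (p^s) :=
  (Nat.coprime_comm.mp ((hp.out.coprime_iff_not_dvd).mpr h)).pow_right s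

lemma isUnit_cast {j : ℕ} (h : ¬ p ∣ j) : IsUnit (j : ℤ_[p]) := by
  rw [PadicInt.isUnit_iff]
  refine le_antisymm (PadicInt.norm_le_one _) ?_
  by_contra hlt
  push_neg at hlt
  have h2 : ‖((j : ℤ) : ℤ_[p])‖ < 1 := by push_cast; exact hlt
  rw [PadicInt.norm_int_lt_one_iff_dvd] at h2
  exact h (Int.natCast_dvd_natCast.mp (by exact_mod_cast h2))

lemma pow_dvd_iff (s : ℕ) (x : ℤ_[p]) :
    (p : ℤ_[p])^s ∣ x ↔ PadicInt.toZModPow s x = 0 := by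
  rw [← Ideal.mem_span_singleton, ← PadicInt.ker_toZModPow, RingHom.mem_ker]

lemma isUnit_zmod_cast {s j : ℕ} (h : ¬ p ∣ j) : IsUnit (j : ZMod (p^s)) :=
  (ZMod.isUnit_iff_coprime j (p^s)).mpr (coprime_pow s h)

lemma zmod_cast_ker {s : ℕ} (x : ZMod (p^(s+1)))
    (hx : ZMod.castHom (pow_dvd_pow p (Nat.le_succ s)) (ZMod (p^s)) x = 0) :
    ∃ t : ZMod (p^(s+1)), x = (p : ZMod (p^(s+1)))^s * t := by
  haveI : NeZero (p^(s+1)) := ⟨pow_ne_zero _ hp.out.pos.ne'⟩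
  haveI : NeZero (p^s) := ⟨pow_ne_zero _ hp.out.pos.ne'⟩
  have hv : ((x.val : ℕ) : ZMod (p^(s+1))) = x := ZMod.natCast_rightInverse x
  have h2 : ((x.val : ℕ) : ZMod (p^s)) = 0 := by
    rw [ZMod.castHom_apply, ZMod.cast_eq_val] at hx; exact_mod_cast hx
  rw [ZMod.natCast_eq_zero_iff] at h2
  obtain ⟨c, hc⟩ := h2
  exact ⟨(c : ZMod (p^(s+1))), by rw [← hv, hc]; push_cast; ring⟩

section periodic
variable {M : Type*} [AddCommMonoid M]

lemma jk_periodic_shift (g : ℕ → M) (T : ℕ) (hg : ∀ j, g (j + T) = g j) (a : ℕ) :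
    ∀ j, g (j + a * T) = g j := by
  induction a with
  | zero => simp
  | succ a ih =>
      intro j
      have h1 : j + (a+1) * T = (j + a * T) + T := by ring
      rw [h1, hg, ih]

lemma jk_periodic_sum (g : ℕ → M) (T : ℕ) (hg : ∀ j, g (j + T) = g j) (N : ℕ) :
    ∑ j ∈ Ioc 0 (N*T), g j = N • ∑ j ∈ Ioc 0 T, g j := by
  induction N with
  | zero => simp
  | succ N ih =>
      have h1 : N * T ≤ (N+1) * T := Nat.mul_le_mul_right T (by omega)
      rw [← sum_Ioc_consecutive g (Nat.zero_le (N*T)) h1, ih]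
      have h2 : Ioc (N*T) ((N+1)*T) = map (addLeftEmbedding (N*T)) (Ioc 0 T) := by
        rw [map_add_left_Ioc]; congr 1 <;> ring
      rw [h2, sum_map]
      simp only [addLeftEmbedding_apply]
      have h3 : ∀ j ∈ Ioc 0 T, g (N * T + j) = g j := by
        intro j _; rw [add_comm, jk_periodic_shift g T hg N j]
      rw [sum_congr rfl h3, succ_nsmul]

end periodic

section unitsums
variable {M : Type*} [AddCommMonoid M]

lemma sum_units_eq {s : ℕ} (hs : 1 ≤ s) (F : ZMod (p^s) → M) :
    ∑ j ∈ Ioc 0 (p^s), (if p ∣ j then 0 else F (j : ZMod (p^s)))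
      = ∑ u : (ZMod (p^s))ˣ, F u := by
  haveI : NeZero (p^s) := ⟨pow_ne_zero _ hp.out.pos.ne'⟩
  have hconv : ∑ j ∈ Ioc 0 (p^s), (if p ∣ j then 0 else F (j : ZMod (p^s)))
      = ∑ j ∈ (Ioc 0 (p^s)).filter (fun j => ¬ p ∣ j), F (j : ZMod (p^s)) := by
    rw [sum_filter]
    exact sum_congr rfl (fun j _ => by by_cases h : p ∣ j <;> simp [h])
  rw [hconv]
  have hps : 1 < p^s := by
    have := hp.out.two_le
    calc 1 < p := by omega
      _ ≤ p^s := Nat.le_self_pow (by omega) p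
  refine sum_nbij' (fun j => if h : ¬ p ∣ j then ZMod.unitOfCoprime j (coprime_pow s h) else 1)
    (fun u => (u : ZMod (p^s)).val) ?_ ?_ ?_ ?_ ?_
  · intro a _; exact mem_univ _
  · intro u _
    simp only [mem_filter, mem_Ioc]
    have hval : (u : ZMod (p^s)).val < p^s := ZMod.val_lt _
    have hiu : IsUnit (((u : ZMod (p^s)).val : ℕ) : ZMod (p^s)) := by
      rw [ZMod.natCast_rightInverse (u : ZMod (p^s))]; exact u.isUnit
    have hco : Nat.Coprime (u : ZMod (p^s)).val (p^s) := (ZMod.isUnit_iff_coprime _ _).mp hiu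
    have hpd : ¬ p ∣ (u : ZMod (p^s)).val := by
      intro hdvd
      have : p ∣ Nat.gcd (u : ZMod (p^s)).val (p^s) :=
        Nat.dvd_gcd hdvd (dvd_pow_self p (by omega))
      rw [hco] at this
      exact Nat.Prime.one_lt hp.out |>.ne' (Nat.le_antisymm (Nat.le_of_dvd one_pos this) (by
        have := hp.out.two_le; omega) ▸ rfl)
    have hv0 : (u : ZMod (p^s)).val ≠ 0 := by
      intro h0; rw [h0] at hco
      simp [Nat.coprime_zero_left] at hco
      have := hp.out.two_le
      omega
    exact ⟨⟨by omega, le_of_lt hval⟩, hpd⟩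
  · intro a ha
    simp only [mem_filter, mem_Ioc] at ha
    simp only [dif_pos ha.2]
    have halt : a < p^s := by
      rcases Nat.lt_or_ge a (p^s) with h | h
      · exact h
      · exfalso
        have : a = p^s := by omega
        exact ha.2 (this ▸ dvd_pow_self p (by have := hp.out.two_le; omega : s ≠ 0))
    have : ((ZMod.unitOfCoprime a (coprime_pow s ha.2) : (ZMod (p^s))ˣ) : ZMod (p^s)) = (a : ZMod (p^s)) :=
      ZMod.coe_unitOfCoprime a _
    rw [this, ZMod.val_cast_of_lt halt]
  · intro u _
    have hpd : ¬ p ∣ (u : ZMod (p^s)).val := by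
      have hiu : IsUnit (((u : ZMod (p^s)).val : ℕ) : ZMod (p^s)) := by
        rw [ZMod.natCast_rightInverse (u : ZMod (p^s))]; exact u.isUnit
      have hco := (ZMod.isUnit_iff_coprime _ _).mp hiu
      intro hdvd
      have : p ∣ Nat.gcd (u : ZMod (p^s)).val (p^s) :=
        Nat.dvd_gcd hdvd (dvd_pow_self p (by omega))
      rw [hco] at this
      have := Nat.le_of_dvd one_pos this
      have := hp.out.two_le
      omega
    simp only [dif_pos hpd]
    apply Units.ext
    rw [ZMod.coe_unitOfCoprime, ZMod.natCast_rightInverse (u : ZMod (p^s))]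
  · intro a ha
    simp only [mem_filter, mem_Ioc] at ha
    simp only [dif_pos ha.2, ZMod.coe_unitOfCoprime]

lemma sum_units_inv {s : ℕ} (F : (ZMod (p^s))ˣ → M) :
    ∑ u : (ZMod (p^s))ˣ, F u⁻¹ = ∑ u : (ZMod (p^s))ˣ, F u :=
  Fintype.sum_equiv (Equiv.inv _) _ _ (fun u => by simp)

end unitsums

lemma ringInverse_eq {R : Type*} [CommRing R] (a b : R) (h : a * b = 1) :
    Ring.inverse a = b := by
  have ha : IsUnit a := IsUnit.of_mul_eq_one _ h
  calc Ring.inverse a = Ring.inverse a * (a * b) := by rw [h, mul_one]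
    _ = (Ring.inverse a * a) * b := by ring
    _ = b := by rw [Ring.inverse_mul_cancel _ ha, one_mul]

lemma units_pow_sum_zero (s r : ℕ) (hs : 1 ≤ s) (hr : ¬ (p-1) ∣ r) :
    ∑ u : (ZMod (p^s))ˣ, ((u : ZMod (p^s)))^r = 0 := by
  haveI : NeZero (p^s) := ⟨pow_ne_zero _ hp.out.pos.ne'⟩
  obtain ⟨g₀, hg₀⟩ := IsCyclic.exists_generator (α := (ZMod p)ˣ)
  have horder : orderOf g₀ = p - 1 := by
    rw [orderOf_eq_card_of_forall_mem_zpowers hg₀, Nat.card_eq_fintype_card, ZMod.card_units]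
  have hg₀r : g₀ ^ r ≠ 1 := by
    intro h1
    exact hr (horder ▸ orderOf_dvd_of_pow_eq_one h1)
  have hdvd : p ∣ p^s := dvd_pow_self p (by omega)
  obtain ⟨G, hG⟩ := ZMod.unitsMap_surjective hdvd g₀
  set x : ZMod (p^s) := ((G : ZMod (p^s)))^r - 1 with hx
  have hcast : (ZMod.castHom hdvd (ZMod p)) x = ((g₀ : ZMod p))^r - 1 := by
    rw [hx, map_sub, map_pow, map_one]
    congr 2
    rw [← hG, ZMod.unitsMap_def]
    rfl
  have hcast_ne : (ZMod.castHom hdvd (ZMod p)) x ≠ 0 := by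
    rw [hcast]
    intro h0
    have h1 : ((g₀ : ZMod p))^r = 1 := by rwa [sub_eq_zero] at h0
    exact hg₀r (Units.ext (by rw [Units.val_pow_eq_pow_val, Units.val_one]; exact h1))
  have hux : IsUnit x := by
    have h2 : ((x.val : ℕ) : ZMod p) ≠ 0 := by
      have : (ZMod.castHom hdvd (ZMod p)) x = ((x.val : ℕ) : ZMod p) := by
        rw [ZMod.castHom_apply, ZMod.cast_eq_val]
      rw [← this]; exact hcast_ne
    rw [Ne, ZMod.natCast_eq_zero_iff] at h2
    have := (ZMod.isUnit_iff_coprime x.val (p^s)).mpr (coprime_pow s h2)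
    rwa [ZMod.natCast_rightInverse x] at this
  have hre : ∑ u : (ZMod (p^s))ˣ, ((G * u : (ZMod (p^s))ˣ) : ZMod (p^s))^r
      = ∑ u : (ZMod (p^s))ˣ, ((u : ZMod (p^s)))^r := by
    exact Fintype.sum_equiv (Equiv.mulLeft G) _ _ (fun u => rfl)
  have hre2 : ((G : ZMod (p^s)))^r * ∑ u : (ZMod (p^s))ˣ, ((u : ZMod (p^s)))^r
      = ∑ u : (ZMod (p^s))ˣ, ((u : ZMod (p^s)))^r := by
    simp only [Units.val_mul, mul_pow] at hre
    rw [mul_sum]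
    exact hre
  have h3 : x * ∑ u : (ZMod (p^s))ˣ, ((u : ZMod (p^s)))^r = 0 := by
    rw [hx, sub_mul, one_mul, hre2, sub_self]
  obtain ⟨ux, hux'⟩ := hux
  rw [← hux', Units.mul_right_eq_zero] at h3
  exact h3

lemma psi_dvd (r : ℕ) : ∀ s : ℕ, 1 ≤ s →
    ∃ y : ZMod (p^s), (∑ j ∈ Ioc 0 (p^s), if p ∣ j then 0 else ((j : ZMod (p^s)))^r)
      = (p : ZMod (p^s))^(s-1) * y := by
  intro s
  induction s with
  | zero => omega
  | succ t ih =>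
      intro _
      rcases Nat.eq_zero_or_pos t with ht | ht
      · subst ht
        exact ⟨_, by rw [pow_zero, one_mul]⟩
      · obtain ⟨y', hy'⟩ := ih ht
        have hc : (ZMod.castHom (pow_dvd_pow p (Nat.le_succ t)) (ZMod (p^t)))
            (∑ j ∈ Ioc 0 (p^(t+1)), if p ∣ j then 0 else ((j : ZMod (p^(t+1))))^r)
            = ∑ j ∈ Ioc 0 (p^(t+1)), if p ∣ j then 0 else ((j : ZMod (p^t)))^r := by
          rw [map_sum]
          refine sum_congr rfl fun j _ => ?_
          by_cases h : p ∣ j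
          · simp [h]
          · simp only [h, if_false, map_pow, map_natCast]
        have hper : ∀ j : ℕ, (fun j => if p ∣ j then (0 : ZMod (p^t)) else ((j : ZMod (p^t)))^r) (j + p^t)
            = (fun j => if p ∣ j then (0 : ZMod (p^t)) else ((j : ZMod (p^t)))^r) j := by
          intro j
          have hd : p ∣ p^t := dvd_pow_self p (by omega)
          have hiff : (p ∣ j + p^t) ↔ p ∣ j := by
            constructor
            · intro h; have := Nat.dvd_sub h hd; simpa using this
            · intro h; exact Nat.dvd_add h hd
          simp only [hiff]
          congr 2
          rw [Nat.cast_add, ZMod.natCast_self, add_zero]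
        have hNT : p^(t+1) = p * p^t := by ring
        have hsplit : (∑ j ∈ Ioc 0 (p^(t+1)), if p ∣ j then (0:ZMod (p^t)) else ((j : ZMod (p^t)))^r)
            = p • ∑ j ∈ Ioc 0 (p^t), if p ∣ j then (0:ZMod (p^t)) else ((j : ZMod (p^t)))^r := by
          rw [hNT]
          exact jk_periodic_sum _ (p^t) hper p
        have hzero : (ZMod.castHom (pow_dvd_pow p (Nat.le_succ t)) (ZMod (p^t)))
            (∑ j ∈ Ioc 0 (p^(t+1)), if p ∣ j then 0 else ((j : ZMod (p^(t+1))))^r) = 0 := by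
          rw [hc, hsplit, hy', nsmul_eq_mul]
          have h1 : (p : ZMod (p^t)) * ((p : ZMod (p^t))^(t-1) * y') = (p : ZMod (p^t))^t * y' := by
            rw [← mul_assoc, ← _root_.pow_succ']
            congr 2
            omega
          rw [h1]
          have h2 : (p : ZMod (p^t))^t = 0 := by
            rw [← Nat.cast_pow, ZMod.natCast_self]
          rw [h2, zero_mul]
        obtain ⟨y, hy⟩ := zmod_cast_ker _ hzero
        exact ⟨y, by rw [hy]; norm_num⟩

variable (p) in
/-- `S`-type power sums of inverses in `ℤ_[p]` -/
noncomputable def Ssum (k r : ℕ) : ℤ_[p] :=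
  ∑ j ∈ Ioc 0 (p*k), if p ∣ j then 0 else Ring.inverse ((j : ℕ) : ℤ_[p]) ^ r

lemma toZModPow_Ssum (k r s : ℕ) (hs : 1 ≤ s) (hdvd : p^s ∣ p*k) :
    PadicInt.toZModPow s (Ssum p k r)
      = ((p*k)/p^s) • ∑ u : (ZMod (p^s))ˣ, ((u : ZMod (p^s)))^r := by
  rw [Ssum, map_sum]
  have h1 : ∀ j ∈ Ioc 0 (p*k), PadicInt.toZModPow s (if p ∣ j then 0 else Ring.inverse ((j : ℕ) : ℤ_[p]) ^ r)
      = (fun j => if p ∣ j then 0 else (Ring.inverse ((j : ZMod (p^s))))^r) j := by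
    intro j _
    by_cases h : p ∣ j
    · simp [h]
    · simp only [h, if_false, map_pow]
      rw [map_ringInverse _ _ (isUnit_cast h), map_natCast]
  rw [sum_congr rfl h1]
  have hNT : p*k = ((p*k)/p^s) * p^s := (Nat.div_mul_cancel hdvd).symm
  have hper : ∀ j : ℕ, (fun j => if p ∣ j then (0 : ZMod (p^s)) else (Ring.inverse ((j : ZMod (p^s))))^r) (j + p^s)
      = (fun j => if p ∣ j then (0:ZMod (p^s)) else (Ring.inverse ((j : ZMod (p^s))))^r) j := by
    intro j
    have hd : p ∣ p^s := dvd_pow_self p (by omega)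
    have hiff : (p ∣ j + p^s) ↔ p ∣ j := by
      constructor
      · intro h; have := Nat.dvd_sub h hd; simpa using this
      · intro h; exact Nat.dvd_add h hd
    simp only [hiff]
    congr 2
    rw [Nat.cast_add, ZMod.natCast_self, add_zero]
  have hps := jk_periodic_sum (fun j => if p ∣ j then (0 : ZMod (p^s)) else (Ring.inverse ((j : ZMod (p^s))))^r) (p^s) hper ((p*k)/p^s)
  rw [← hNT] at hps
  rw [hps]
  congr 1
  rw [sum_units_eq (p := p) hs (fun x => (Ring.inverse x)^r)]
  refine Eq.trans (sum_congr rfl fun u _ => by rw [Ring.inverse_unit]) ?_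
  exact sum_units_inv (p := p) (s := s) (fun u => ((u : ZMod (p^s)))^r)

lemma Ssum_high (k r s : ℕ) (hs : 1 ≤ s) (hdvd : p^s ∣ p*k) (hr : ¬ (p-1) ∣ r) :
    (p : ℤ_[p])^s ∣ Ssum p k r := by
  rw [pow_dvd_iff, toZModPow_Ssum k r s hs hdvd, units_pow_sum_zero s r hs hr, smul_zero]

lemma Ssum_low (k r s : ℕ) (hdvd : p^(s+1) ∣ p*k) : (p : ℤ_[p])^s ∣ Ssum p k r := by
  rcases Nat.eq_zero_or_pos s with hs | hs
  · subst hs; simpa using one_dvd _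
  rw [pow_dvd_iff, toZModPow_Ssum k r s hs (dvd_trans (pow_dvd_pow p (Nat.le_succ s)) hdvd)]
  obtain ⟨c, hc⟩ := hdvd
  have hN : (p*k)/p^s = p * c := by
    rw [hc, pow_succ]
    rw [show p^s * p * c = p^s * (p * c) by ring]
    exact Nat.mul_div_cancel_left _ (pow_pos hp.out.pos s)
  obtain ⟨y, hy⟩ := psi_dvd r s hs (p := p)
  rw [← sum_units_eq hs (fun x => x^r), hy, hN, nsmul_eq_mul]
  push_cast
  rw [show (p : ZMod (p^s)) * (c : ZMod (p^s)) * ((p : ZMod (p^s))^(s-1) * y)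
      = (c : ZMod (p^s)) * ((p : ZMod (p^s))^(1+(s-1)) * y) by ring]
  have hss : 1 + (s-1) = s := by omega
  rw [hss]
  have h2 : (p : ZMod (p^s))^s = 0 := by rw [← Nat.cast_pow, ZMod.natCast_self]
  rw [h2, zero_mul, mul_zero]

variable (p) in
/-- `T`-type power sums of inverses of `j(pk-j)` in `ℤ_[p]` -/
noncomputable def Tsum (k r : ℕ) : ℤ_[p] :=
  ∑ j ∈ Ioc 0 (p*k), if p ∣ j then 0 else Ring.inverse ((j * (p*k - j) : ℕ) : ℤ_[p]) ^ r

lemma not_dvd_cj {k j : ℕ} (hj : j ≤ p * k) (h : ¬ p ∣ j) : ¬ p ∣ j * (p*k - j) := by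
  intro hd
  rcases (Nat.Prime.dvd_mul hp.out).mp hd with h1 | h1
  · exact h h1
  · have h2 := Nat.dvd_sub (Dvd.intro k rfl) h1
    rw [Nat.sub_sub_self hj] at h2
    exact h h2

lemma T_approx (k r s : ℕ) (hdvd : p^s ∣ p*k) :
    (p : ℤ_[p])^s ∣ Tsum p k r - (-1)^r * Ssum p k (2*r) := by
  rw [Tsum, Ssum, mul_sum, ← sum_sub_distrib]
  refine dvd_sum fun j hj => ?_
  simp only [mem_Ioc] at hj
  by_cases h : p ∣ j
  · simp [h]
  simp only [h, if_false]
  set a : ℤ_[p] := ((j * (p*k - j) : ℕ) : ℤ_[p]) with ha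
  set b : ℤ_[p] := -((j : ℕ) : ℤ_[p])^2 with hb
  have hua : IsUnit a := isUnit_cast (not_dvd_cj hj.2 h)
  have hub : IsUnit b := by
    rw [hb]
    exact (isUnit_cast h |>.pow 2).neg
  have hsign : (-1)^r * Ring.inverse ((j : ℕ) : ℤ_[p]) ^ (2*r) = Ring.inverse b ^ r := by
    have h1 : Ring.inverse b = -(Ring.inverse ((j : ℕ) : ℤ_[p]))^2 := by
      apply ringInverse_eq
      rw [hb]
      have := Ring.mul_inverse_cancel _ (isUnit_cast h (p := p) (j := j))
      calc -((j : ℕ) : ℤ_[p])^2 * -(Ring.inverse ((j : ℕ) : ℤ_[p]))^2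
          = (((j : ℕ) : ℤ_[p]) * Ring.inverse ((j : ℕ) : ℤ_[p]))^2 := by ring
        _ = 1 := by rw [this, one_pow]
    rw [h1, neg_pow, pow_mul]
    ring
  rw [hsign]
  have hkey : Ring.inverse a ^ r - Ring.inverse b ^ r
      = Ring.inverse a ^ r * Ring.inverse b ^ r * (b^r - a^r) := by
    have ha' : a ^ r * Ring.inverse a ^ r = 1 := by
      rw [← mul_pow, Ring.mul_inverse_cancel _ hua, one_pow]
    have hb' : b ^ r * Ring.inverse b ^ r = 1 := by
      rw [← mul_pow, Ring.mul_inverse_cancel _ hub, one_pow]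
    linear_combination (-(Ring.inverse a ^ r)) * hb' + (Ring.inverse b ^ r) * ha'
  rw [hkey]
  have hba : b - a = -((j : ℤ_[p]) * ((p*k : ℕ) : ℤ_[p])) := by
    rw [hb, ha]
    have hcast : ((j * (p*k - j) : ℕ) : ℤ_[p]) = (j : ℤ_[p]) * (((p*k : ℕ) : ℤ_[p]) - (j : ℤ_[p])) := by
      push_cast [hj.2]
      ring
    rw [hcast]
    ring
  have hdvd2 : (p : ℤ_[p])^s ∣ b - a := by
    rw [hba]
    have : ((p^s : ℕ) : ℤ_[p]) ∣ ((p*k : ℕ) : ℤ_[p]) := Nat.cast_dvd_cast hdvd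
    rw [Nat.cast_pow] at this
    exact Dvd.dvd.neg_right (this.mul_left _)
  exact Dvd.dvd.mul_left (hdvd2.trans (sub_dvd_pow_sub_pow b a r)) _

lemma T_low (k r s : ℕ) (hdvd : p^(s+1) ∣ p*k) : (p : ℤ_[p])^s ∣ Tsum p k r := by
  have h1 := T_approx k r s (dvd_trans (pow_dvd_pow p (Nat.le_succ s)) hdvd)
  have h2 := Ssum_low k (2*r) s hdvd
  have h3 : Tsum p k r = (Tsum p k r - (-1)^r * Ssum p k (2*r)) + (-1)^r * Ssum p k (2*r) := by ring
  rw [h3]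
  exact dvd_add h1 (h2.mul_left _)

lemma T_one (k s : ℕ) (hp3 : 3 < p) (hdvd : p^(s+1) ∣ p*k) :
    (p : ℤ_[p])^(s+1) ∣ Tsum p k 1 := by
  have hiden : Tsum p k 1 + Ssum p k 2
      = ((p*k : ℕ) : ℤ_[p]) * ∑ j ∈ Ioc 0 (p*k), (if p ∣ j then 0 else
          (j : ℤ_[p]) * Ring.inverse ((j * (p*k - j) : ℕ) : ℤ_[p]) * Ring.inverse ((j : ℕ) : ℤ_[p])^2) := by
    rw [Tsum, Ssum, mul_sum, ← sum_add_distrib]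
    refine sum_congr rfl fun j hj => ?_
    simp only [mem_Ioc] at hj
    by_cases h : p ∣ j
    · simp [h]
    simp only [h, if_false]
    have hua := isUnit_cast (not_dvd_cj hj.2 h) (p := p)
    have huj := isUnit_cast h (p := p)
    have hca := Ring.mul_inverse_cancel _ hua
    have hcj := Ring.mul_inverse_cancel _ huj
    have hnat : (j*(p*k-j) : ℕ) + j*j = j*(p*k) := by
      have e : (p*k - j) + j = p*k := by omega
      rw [← Nat.mul_add, e]
    simp only [pow_one]
    have e1 : (((j*(p*k-j):ℕ) : ℤ_[p])) * Ring.inverse ((j*(p*k-j):ℕ) : ℤ_[p]) = 1 :=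
      Ring.mul_inverse_cancel _ hua
    have e2 : (((j:ℕ) : ℤ_[p])) * Ring.inverse ((j:ℕ) : ℤ_[p]) = 1 := Ring.mul_inverse_cancel _ huj
    have e2' : (((j:ℕ) : ℤ_[p]))^2 * Ring.inverse ((j:ℕ) : ℤ_[p])^2 = 1 := by
      rw [← mul_pow, e2, one_pow]
    have e3 : (((j*(p*k-j) : ℕ) : ℤ_[p]) + ((j:ℕ) : ℤ_[p])^2) = ((j : ℕ) : ℤ_[p]) * ((p*k : ℕ) : ℤ_[p]) := by
      have := congrArg (Nat.cast : ℕ → ℤ_[p]) hnat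
      push_cast at this ⊢
      linear_combination this
    linear_combination (Ring.inverse ((j*(p*k-j):ℕ) : ℤ_[p]) * Ring.inverse ((j:ℕ) : ℤ_[p])^2) * e3
      - Ring.inverse ((j*(p*k-j):ℕ) : ℤ_[p]) * e2' - Ring.inverse ((j:ℕ) : ℤ_[p])^2 * e1
  have hS2 : (p : ℤ_[p])^(s+1) ∣ Ssum p k 2 := by
    refine Ssum_high k 2 (s+1) (by omega) hdvd ?_
    intro hd
    have := Nat.le_of_dvd (by omega) hd
    omega
  have h3 : Tsum p k 1 = (Tsum p k 1 + Ssum p k 2) - Ssum p k 2 := by ring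
  rw [h3, hiden]
  refine dvd_sub ?_ hS2
  have : ((p^(s+1) : ℕ) : ℤ_[p]) ∣ ((p*k : ℕ) : ℤ_[p]) := Nat.cast_dvd_cast hdvd
  rw [Nat.cast_pow] at this
  exact (this.mul_right _)

variable (p) in
def Fs (k : ℕ) : Finset ℕ := (Ioc 0 (p*k)).filter (fun j => ¬ p ∣ j)

variable (p) in
noncomputable def xv (k : ℕ) : {x // x ∈ Fs p k} → ℤ_[p] :=
  fun j => Ring.inverse ((j.val * (p*k - j.val) : ℕ) : ℤ_[p])

variable (p) in
noncomputable def Esym (k i : ℕ) : ℤ_[p] :=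
  MvPolynomial.eval (xv p k) (MvPolynomial.esymm {x // x ∈ Fs p k} ℤ_[p] i)

lemma eval_psum (k r : ℕ) :
    MvPolynomial.eval (xv p k) (MvPolynomial.psum {x // x ∈ Fs p k} ℤ_[p] r) = Tsum p k r := by
  rw [MvPolynomial.psum, map_sum]
  simp only [map_pow, MvPolynomial.eval_X]
  rw [univ_eq_attach]
  simp only [xv]
  rw [sum_attach (Fs p k) (fun j => Ring.inverse ((j * (p*k - j) : ℕ) : ℤ_[p]) ^ r)]
  rw [Fs, sum_filter, Tsum]
  refine sum_congr rfl fun j _ => ?_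
  by_cases h : p ∣ j <;> simp [h]

lemma esym_one (k : ℕ) : Esym p k 1 = Tsum p k 1 := by
  rw [← eval_psum, Esym, MvPolynomial.psum, MvPolynomial.esymm_one]
  simp [pow_one]

lemma esym_zero (k : ℕ) : Esym p k 0 = 1 := by
  rw [Esym, MvPolynomial.esymm_zero, map_one]

lemma newton_dvd (k i s : ℕ)
    (hT : ∀ r : ℕ, (p : ℤ_[p])^s ∣ Tsum p k r) :
    (p : ℤ_[p])^s ∣ (i : ℤ_[p]) * Esym p k i := by
  have hnewton := MvPolynomial.mul_esymm_eq_sum {x // x ∈ Fs p k} ℤ_[p] i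
  have heval := congrArg (MvPolynomial.eval (xv p k)) hnewton
  rw [map_mul, map_natCast, map_mul, map_pow, map_neg, map_one, map_sum] at heval
  rw [← Esym] at heval
  rw [heval]
  refine Dvd.dvd.mul_left ?_ _
  refine dvd_sum fun a _ => ?_
  rw [map_mul, map_mul, map_pow, map_neg, map_one, eval_psum]
  exact ((hT a.2).mul_left _)

lemma prod_expansion (k : ℕ) (w : ℤ_[p]) :
    ∏ j ∈ Fs p k, (1 + w * Ring.inverse ((j * (p*k - j) : ℕ) : ℤ_[p]))
      = 1 + ∑ i ∈ Ioc 0 ((Fs p k).card), w^i * Esym p k i := by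
  have h1 : ∏ j ∈ Fs p k, (1 + w * Ring.inverse ((j * (p*k - j) : ℕ) : ℤ_[p]))
      = ∏ j ∈ (Fs p k).attach, (w * xv p k j + 1) := by
    simp only [xv]
    rw [prod_attach (Fs p k) (fun j => w * Ring.inverse ((j * (p*k - j) : ℕ) : ℤ_[p]) + 1)]
    exact prod_congr rfl fun j _ => by ring
  rw [h1, ← univ_eq_attach, prod_add]
  have h2 : ∀ t ∈ univ.powerset, (∏ j ∈ t, (w * xv p k j)) * (∏ j ∈ univ \ t, (1:ℤ_[p]))
      = w^(t.card) * ∏ j ∈ t, xv p k j := by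
    intro t _
    rw [prod_const_one, mul_one, prod_mul_distrib, prod_const]
  rw [sum_congr rfl h2, sum_powerset]
  have h3 : ∀ i ∈ range (#(univ : Finset {x // x ∈ Fs p k}) + 1),
      (∑ t ∈ powersetCard i (univ : Finset {x // x ∈ Fs p k}), w^(t.card) * ∏ j ∈ t, xv p k j)
      = w^i * Esym p k i := by
    intro i _
    rw [Esym, MvPolynomial.esymm, map_sum, mul_sum]
    refine sum_congr rfl fun t ht => ?_
    rw [mem_powersetCard] at ht
    rw [ht.2, map_prod]
    simp [MvPolynomial.eval_X]
  rw [sum_congr rfl h3]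
  have hcard : #(univ : Finset {x // x ∈ Fs p k}) = (Fs p k).card := by
    rw [univ_eq_attach, card_attach]
  rw [hcard, range_eq_Ico, sum_eq_sum_Ico_succ_bot (by omega),
    show Ico 1 ((Fs p k).card + 1) = Ioc 0 ((Fs p k).card) from by
      rw [Finset.Ico_add_one_right_eq_Icc, ← Finset.Icc_add_one_left_eq_Ioc]; rfl,
    pow_zero, esym_zero, mul_one]


lemma main_est (hp3 : 3 < p) (k m n : ℕ) (α β γ : ℕ)
    (hα : p^α ∣ k) (hβ : p^β ∣ m) (hγ : p^γ ∣ n) :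
    (p : ℤ_[p])^(3+α+β+γ) ∣
      (∏ j ∈ Fs p k, (1 + ((p:ℤ_[p])^2 * (m:ℤ_[p]) * (n:ℤ_[p]))
        * Ring.inverse ((j * (p*k - j) : ℕ) : ℤ_[p]))) - 1 := by
  set w : ℤ_[p] := (p:ℤ_[p])^2 * (m:ℤ_[p]) * (n:ℤ_[p]) with hw_def
  rw [prod_expansion, add_sub_cancel_left]
  refine dvd_sum fun i hi => ?_
  simp only [mem_Ioc] at hi
  have hpne : (p:ℤ_[p]) ≠ 0 := Nat.cast_ne_zero.mpr hp.out.pos.ne'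
  have hw : (p:ℤ_[p])^(2+β+γ) ∣ w := by
    have hm : (p:ℤ_[p])^β ∣ (m:ℤ_[p]) := by
      have := Nat.cast_dvd_cast (α := ℤ_[p]) hβ
      rwa [Nat.cast_pow] at this
    have hn : (p:ℤ_[p])^γ ∣ (n:ℤ_[p]) := by
      have := Nat.cast_dvd_cast (α := ℤ_[p]) hγ
      rwa [Nat.cast_pow] at this
    rw [hw_def, pow_add, pow_add]
    exact mul_dvd_mul (mul_dvd_mul dvd_rfl hm) hn
  have hα' : p^(α+1) ∣ p*k := by
    rw [pow_succ, mul_comm (p^α) p]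
    exact mul_dvd_mul_left p hα
  rcases eq_or_lt_of_le (show 1 ≤ i from hi.1) with h1 | h2
  · -- i = 1
    rw [← h1, pow_one, esym_one]
    have hT1 := T_one k α hp3 hα'
    have hsum : 3+α+β+γ = (2+β+γ) + (α+1) := by omega
    rw [hsum, pow_add]
    exact mul_dvd_mul hw hT1
  · -- 2 ≤ i
    have hi2 : 2 ≤ i := h2
    have hipos : 0 < i := by omega
    have hTall : ∀ r, (p:ℤ_[p])^α ∣ Tsum p k r := fun r => T_low k r α hα'
    have hNE := newton_dvd k i α hTall
    set v := i.factorization p with hv_def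
    have hvlt : v < i := by
      calc v < 2^v := Nat.lt_two_pow_self (n := v)
        _ ≤ p^v := Nat.pow_le_pow_left hp.out.two_le v
        _ ≤ i := Nat.le_of_dvd hipos (Nat.ordProj_dvd i p)
    have hifact : (i:ℤ_[p]) = (p:ℤ_[p])^v * ((i / p^v : ℕ) : ℤ_[p]) := by
      rw [← Nat.cast_pow, ← Nat.cast_mul, Nat.ordProj_mul_ordCompl_eq_self i p]
    have hiu : IsUnit ((i / p^v : ℕ) : ℤ_[p]) :=
      isUnit_cast (Nat.not_dvd_ordCompl hp.out (by omega))
    have hwpow : (p:ℤ_[p])^((2+β+γ)*i) ∣ w^i := by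
      have := pow_dvd_pow_of_dvd hw i
      rwa [← pow_mul] at this
    have he : (2+β+γ)*i = 2*i + (β+γ)*i := by ring
    have he2 : β+γ ≤ (β+γ)*i := Nat.le_mul_of_pos_right _ hipos
    by_cases hcase : α ≤ v
    · refine dvd_mul_of_dvd_left (dvd_trans (pow_dvd_pow _ ?_) hwpow) _
      omega
    · push_neg at hcase
      have hsplit : (p:ℤ_[p])^α = (p:ℤ_[p])^v * (p:ℤ_[p])^(α - v) := by
        rw [← pow_add]
        congr 1
        omega
      rw [hifact, hsplit, mul_assoc] at hNE
      have hcancel : (p:ℤ_[p])^(α - v) ∣ ((i / p^v : ℕ) : ℤ_[p]) * Esym p k i :=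
        (mul_dvd_mul_iff_left (pow_ne_zero v hpne)).mp hNE
      have hE : (p:ℤ_[p])^(α - v) ∣ Esym p k i := by
        have hrw : Esym p k i
            = Ring.inverse ((i / p^v : ℕ) : ℤ_[p]) * (((i / p^v : ℕ) : ℤ_[p]) * Esym p k i) := by
          rw [← mul_assoc, Ring.inverse_mul_cancel _ hiu, one_mul]
        rw [hrw]
        exact hcancel.mul_left _
      have hcomb := mul_dvd_mul hwpow hE
      rw [← pow_add] at hcomb
      exact dvd_trans (pow_dvd_pow _ (by omega)) hcomb

lemma A_pos (t : ℕ) : 0 < A p t := by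
  rw [A]
  refine prod_pos fun j hj => ?_
  simp only [mem_Ioc] at hj
  by_cases h : p ∣ j <;> simp [h]
  omega

lemma choose_key (hpp : 2 ≤ p) (k m : ℕ) :
    (k+m).choose k * ∏ j ∈ Ioc 0 (p*k), (if p ∣ j then 1 else (p*m + j))
      = (p*(k+m)).choose (p*k) * A p k := by
  set B := ∏ j ∈ Ioc 0 (p*k), (if p ∣ j then 1 else (p*m + j)) with hB
  have c1 : (k+m).choose k * k ! * m ! = (k+m)! := by
    have := Nat.choose_mul_factorial_mul_factorial (show k ≤ k+m by omega)
    rwa [Nat.add_sub_cancel_left] at this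
  have hle : p*k ≤ p*(k+m) := Nat.mul_le_mul_left _ (by omega)
  have c2 : (p*(k+m)).choose (p*k) * (p*k)! * (p*m)! = (p*(k+m))! := by
    have h3 := Nat.choose_mul_factorial_mul_factorial hle
    rwa [show p*(k+m) - p*k = p*m from by rw [Nat.mul_add]; omega] at h3
  have l1 := fact_eq p hpp (k+m)
  have l2 := fact_eq p hpp k
  have l3 := fact_eq p hpp m
  have l4' : A p (k+m) = A p m * B := by
    rw [show k+m = m+k from by omega]
    exact A_add p m k
  have big : (p^(k+m) * k ! * m ! * A p m) * ((k+m).choose k * B)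
      = (p^(k+m) * k ! * m ! * A p m) * ((p*(k+m)).choose (p*k) * A p k) := by
    calc (p^(k+m) * k ! * m ! * A p m) * ((k+m).choose k * B)
        = p^(k+m) * ((k+m).choose k * k ! * m !) * (A p m * B) := by ring
      _ = p^(k+m) * (k+m)! * A p (k+m) := by rw [c1, l4']
      _ = (p*(k+m))! := by rw [l1]
      _ = (p*(k+m)).choose (p*k) * (p*k)! * (p*m)! := c2.symm
      _ = (p*(k+m)).choose (p*k) * (p^k * k ! * A p k) * (p^m * m ! * A p m) := by rw [l2, l3]
      _ = (p^(k+m) * k ! * m ! * A p m) * ((p*(k+m)).choose (p*k) * A p k) := by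
          rw [pow_add]; ring
  have hpos : 0 < p^(k+m) * k ! * m ! * A p m :=
    Nat.mul_pos (Nat.mul_pos (Nat.mul_pos (Nat.pow_pos (by omega))
      (Nat.factorial_pos k)) (Nat.factorial_pos m)) (A_pos m)
  exact Nat.eq_of_mul_eq_mul_left hpos big

lemma not_isUnit_p : ¬ IsUnit (p : ℤ_[p]) := by
  rw [PadicInt.isUnit_iff, PadicInt.norm_p]
  intro h
  have h2 : (1:ℝ) < (p:ℝ) := by exact_mod_cast hp.out.one_lt
  have h3 : ((p:ℝ))⁻¹ < 1 := by
    rw [inv_lt_one_iff₀]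
    right; exact h2
  rw [h] at h3
  exact lt_irrefl _ h3

lemma isUnit_iff_not_dvd (x : ℤ_[p]) : IsUnit x ↔ ¬ (p:ℤ_[p]) ∣ x := by
  constructor
  · intro h hd
    exact not_isUnit_p (isUnit_of_dvd_unit hd h)
  · intro hnd
    by_contra hnu
    apply hnd
    have hx : x ∈ IsLocalRing.maximalIdeal ℤ_[p] :=
      (IsLocalRing.mem_maximalIdeal x).mpr (mem_nonunits_iff.mpr hnu)
    rwa [PadicInt.maximalIdeal_eq_span_p, Ideal.mem_span_singleton] at hx

theorem jk_main (hp3 : 3 < p) (n k : ℕ) (hkn : k ≤ n) :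
    ∃ z : ℤ_[p], ((p*n).choose (p*k) : ℤ_[p])
      = (n.choose k : ℤ_[p]) * (1 + (p:ℤ_[p])^3 * (n : ℤ_[p]) * (k : ℤ_[p]) * ((n - k : ℕ) : ℤ_[p]) * z) := by
  rcases Nat.eq_zero_or_pos k with hk0 | hkpos
  · subst hk0
    exact ⟨0, by simp⟩
  rcases eq_or_lt_of_le hkn with hkn' | hklt
  · subst hkn'
    exact ⟨0, by simp [Nat.choose_self]⟩
  set m := n - k with hm
  have hm1 : 1 ≤ m := by omega
  have hnm : n = k + m := by omega
  have hn0 : n ≠ 0 := by omega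
  have hk0 : k ≠ 0 := by omega
  have hm0 : m ≠ 0 := by omega
  have hppos2 : 2 ≤ p := by omega
  have hpkdvd : p ∣ p*k := Dvd.intro k rfl
  -- ℕ identity, cast to ℤ_[p]
  have hkey := choose_key hppos2 k m
  rw [← hnm] at hkey
  set Bf : ℤ_[p] := ∏ j ∈ Fs p k, ((p*m + j : ℕ) : ℤ_[p]) with hBf_def
  set Ac : ℤ_[p] := ∏ j ∈ Fs p k, ((j : ℕ) : ℤ_[p]) with hAc_def
  have hBc : ((∏ j ∈ Ioc 0 (p*k), (if p ∣ j then 1 else (p*m + j)) : ℕ) : ℤ_[p]) = Bf := by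
    rw [Nat.cast_prod, hBf_def, Fs, prod_filter]
    exact prod_congr rfl fun j _ => by by_cases h : p ∣ j <;> simp [h]
  have hAc2 : ((A p k : ℕ) : ℤ_[p]) = Ac := by
    rw [A, Nat.cast_prod, hAc_def, Fs, prod_filter]
    exact prod_congr rfl fun j _ => by by_cases h : p ∣ j <;> simp [h]
  have hmain : (n.choose k : ℤ_[p]) * Bf = ((p*n).choose (p*k) : ℤ_[p]) * Ac := by
    have h2 := congrArg (Nat.cast : ℕ → ℤ_[p]) hkey
    rw [Nat.cast_mul, Nat.cast_mul, hBc, hAc2] at h2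
    exact h2
  -- membership facts
  have hmem : ∀ j ∈ Fs p k, (0 < j ∧ j ≤ p*k) ∧ ¬ p ∣ j := by
    intro j hj
    simpa [Fs, mem_filter, mem_Ioc] using hj
  have hAu : IsUnit Ac := by
    rw [hAc_def]
    refine Finset.prod_induction _ IsUnit (fun a b ha hb => ha.mul hb) isUnit_one ?_
    intro j hj
    exact isUnit_cast (hmem j hj).2
  -- reflection
  have hrefl : ∀ f : ℕ → ℤ_[p], ∏ j ∈ Fs p k, f j = ∏ j ∈ Fs p k, f (p*k - j) := by
    intro f
    refine prod_nbij' (fun j => p*k - j) (fun j => p*k - j) ?_ ?_ ?_ ?_ ?_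
    · intro a ha
      obtain ⟨⟨h1, h2⟩, h3⟩ := hmem a ha
      have hne : a ≠ p*k := fun h => h3 (h ▸ hpkdvd)
      simp only [Fs, mem_filter, mem_Ioc]
      refine ⟨⟨by omega, by omega⟩, ?_⟩
      intro hd
      have h4 := Nat.dvd_sub hpkdvd hd
      rw [Nat.sub_sub_self h2] at h4
      exact h3 h4
    · intro a ha
      obtain ⟨⟨h1, h2⟩, h3⟩ := hmem a ha
      have hne : a ≠ p*k := fun h => h3 (h ▸ hpkdvd)
      simp only [Fs, mem_filter, mem_Ioc]
      refine ⟨⟨by omega, by omega⟩, ?_⟩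
      intro hd
      have h4 := Nat.dvd_sub hpkdvd hd
      rw [Nat.sub_sub_self h2] at h4
      exact h3 h4
    · intro a ha
      obtain ⟨⟨h1, h2⟩, _⟩ := hmem a ha
      show p*k - (p*k - a) = a
      omega
    · intro a ha
      obtain ⟨⟨h1, h2⟩, _⟩ := hmem a ha
      show p*k - (p*k - a) = a
      omega
    · intro a ha
      obtain ⟨⟨h1, h2⟩, _⟩ := hmem a ha
      show f a = f (p*k - (p*k - a))
      congr 1
      omega
  have hpn_split : p*n = p*k + p*m := by rw [hnm, Nat.mul_add]
  have hBf' : Bf = ∏ j ∈ Fs p k, ((p*n - j : ℕ) : ℤ_[p]) := by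
    rw [hBf_def, hrefl (fun j => ((p*m + j : ℕ) : ℤ_[p]))]
    refine prod_congr rfl fun j hj => ?_
    obtain ⟨⟨h1, h2⟩, _⟩ := hmem j hj
    congr 1
    omega
  have hAc' : Ac = ∏ j ∈ Fs p k, ((p*k - j : ℕ) : ℤ_[p]) := by
    rw [hAc_def]
    exact hrefl (fun j => ((j : ℕ) : ℤ_[p]))
  set w : ℤ_[p] := (p:ℤ_[p])^2 * (m:ℤ_[p]) * (n:ℤ_[p]) with hw_def
  set P₁ : ℤ_[p] := ∏ j ∈ Fs p k, (1 + w * Ring.inverse ((j * (p*k - j) : ℕ) : ℤ_[p])) with hP₁_def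
  have hpair : Bf * Bf = ∏ j ∈ Fs p k, (((j * (p*k - j) : ℕ) : ℤ_[p]) + w) := by
    nth_rewrite 2 [hBf']
    rw [hBf_def, ← prod_mul_distrib]
    refine prod_congr rfl fun j hj => ?_
    obtain ⟨⟨h1, h2⟩, _⟩ := hmem j hj
    have hjn : j ≤ p*n := by omega
    have hnat : (p*m + j) * (p*n - j) = j*(p*k - j) + p^2*(m*n) := by
      zify [h2, hjn]
      have hnz : (n:ℤ) = (k:ℤ) + (m:ℤ) := by exact_mod_cast hnm
      linear_combination (j:ℤ) * (p:ℤ) * hnz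
    rw [← Nat.cast_mul, hnat]
    push_cast
    rw [hw_def]
    ring
  have hprodc : ∏ j ∈ Fs p k, (((j * (p*k - j) : ℕ) : ℤ_[p]) + w) = Ac * Ac * P₁ := by
    have hstep : ∀ j ∈ Fs p k, (((j * (p*k - j) : ℕ) : ℤ_[p]) + w)
        = ((j * (p*k - j) : ℕ) : ℤ_[p]) * (1 + w * Ring.inverse ((j * (p*k - j) : ℕ) : ℤ_[p])) := by
      intro j hj
      obtain ⟨⟨h1, h2⟩, h3⟩ := hmem j hj
      have hu : IsUnit ((j * (p*k - j) : ℕ) : ℤ_[p]) := isUnit_cast (not_dvd_cj h2 h3)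
      have hc := Ring.mul_inverse_cancel _ hu
      linear_combination (-w) * hc
    rw [prod_congr rfl hstep, prod_mul_distrib, ← hP₁_def]
    congr 1
    have : ∀ j ∈ Fs p k, ((j * (p*k - j) : ℕ) : ℤ_[p]) = ((j:ℕ) : ℤ_[p]) * ((p*k - j : ℕ) : ℤ_[p]) := by
      intro j _
      push_cast
      ring
    rw [prod_congr rfl this, prod_mul_distrib, ← hAc_def, ← hAc']
  set X : ℤ_[p] := Bf * Ring.inverse Ac with hX_def
  have hAcc := Ring.mul_inverse_cancel _ hAu
  have hXCp : ((p*n).choose (p*k) : ℤ_[p]) = (n.choose k : ℤ_[p]) * X := by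
    have h2 : (n.choose k : ℤ_[p]) * Bf * Ring.inverse Ac
        = ((p*n).choose (p*k) : ℤ_[p]) * (Ac * Ring.inverse Ac) := by
      rw [hmain]; ring
    rw [hAcc, mul_one] at h2
    rw [← h2, hX_def]
    ring
  have hX2 : X * X = P₁ := by
    calc X * X = (Bf * Bf) * (Ring.inverse Ac * Ring.inverse Ac) := by rw [hX_def]; ring
      _ = (Ac * Ac * P₁) * (Ring.inverse Ac * Ring.inverse Ac) := by rw [hpair, hprodc]
      _ = P₁ * (Ac * Ring.inverse Ac) * (Ac * Ring.inverse Ac) := by ring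
      _ = P₁ := by rw [hAcc]; ring
  have hX1 : (p:ℤ_[p]) ∣ X - 1 := by
    have hBA : (p:ℤ_[p]) ∣ Bf - Ac := by
      have hiff := pow_dvd_iff (p := p) 1 (Bf - Ac)
      rw [pow_one] at hiff
      rw [hiff, map_sub, hBf_def, hAc_def, map_prod, map_prod]
      have hp0 : ((p:ℕ) : ZMod (p^1)) = 0 := by
        rw [ZMod.natCast_eq_zero_iff, pow_one]
      have : ∀ j ∈ Fs p k, (PadicInt.toZModPow 1) ((p*m + j : ℕ) : ℤ_[p])
          = (PadicInt.toZModPow 1) ((j : ℕ) : ℤ_[p]) := by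
        intro j _
        rw [map_natCast, map_natCast, Nat.cast_add, Nat.cast_mul, hp0]
        ring
      rw [prod_congr rfl this, sub_self]
    have h2 : X - 1 = (Bf - Ac) * Ring.inverse Ac := by
      rw [hX_def, sub_mul, hAcc]
    rw [h2]
    exact hBA.mul_right _
  have hXu1 : IsUnit (X + 1) := by
    rw [isUnit_iff_not_dvd]
    intro hd
    have h2 : (p:ℤ_[p]) ∣ 2 := by
      have h4 : (X+1) - (X-1) = 2 := by ring
      rw [← h4]
      exact dvd_sub hd hX1
    have hu2 : IsUnit (2 : ℤ_[p]) := by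
      have : ¬ p ∣ 2 := fun h => by have := Nat.le_of_dvd (by omega) h; omega
      have h4 := isUnit_cast (p := p) this
      simpa using h4
    exact not_isUnit_p (isUnit_of_dvd_unit h2 hu2)
  -- the key estimate
  set α := k.factorization p with hα_def
  set β := m.factorization p with hβ_def
  set γ := n.factorization p with hγ_def
  have hq : (p:ℤ_[p])^(3+α+β+γ) ∣ P₁ - 1 := by
    rw [hP₁_def, hw_def]
    exact main_est hp3 k m n α β γ (Nat.ordProj_dvd k p) (Nat.ordProj_dvd m p)
      (Nat.ordProj_dvd n p)
  have hXq : (p:ℤ_[p])^(3+α+β+γ) ∣ X - 1 := by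
    have hfac : (X - 1) * (X + 1) = P₁ - 1 := by rw [← hX2]; ring
    have h2 : X - 1 = (P₁ - 1) * Ring.inverse (X+1) := by
      rw [← hfac, mul_assoc, Ring.mul_inverse_cancel _ hXu1, mul_one]
    rw [h2]
    exact hq.mul_right _
  -- rewrite p^3*n*k*m as p^(3+α+β+γ) * unit
  set U : ℤ_[p] := (((n / p^γ) * (k / p^α) * (m / p^β) : ℕ) : ℤ_[p]) with hU_def
  have hUu : IsUnit U := by
    rw [hU_def]
    refine isUnit_cast ?_
    intro hd
    rcases (Nat.Prime.dvd_mul hp.out).mp hd with h2 | h2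
    · rcases (Nat.Prime.dvd_mul hp.out).mp h2 with h3 | h3
      · exact Nat.not_dvd_ordCompl hp.out hn0 h3
      · exact Nat.not_dvd_ordCompl hp.out hk0 h3
    · exact Nat.not_dvd_ordCompl hp.out hm0 h2
  have hD : (p:ℤ_[p])^3 * (n : ℤ_[p]) * (k : ℤ_[p]) * ((n - k : ℕ) : ℤ_[p])
      = (p:ℤ_[p])^(3+α+β+γ) * U := by
    have e_n : (n:ℤ_[p]) = (p:ℤ_[p])^γ * ((n / p^γ : ℕ) : ℤ_[p]) := by
      rw [← Nat.cast_pow, ← Nat.cast_mul, Nat.ordProj_mul_ordCompl_eq_self]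
    have e_k : (k:ℤ_[p]) = (p:ℤ_[p])^α * ((k / p^α : ℕ) : ℤ_[p]) := by
      rw [← Nat.cast_pow, ← Nat.cast_mul, Nat.ordProj_mul_ordCompl_eq_self]
    have e_m : ((n - k : ℕ):ℤ_[p]) = (p:ℤ_[p])^β * ((m / p^β : ℕ) : ℤ_[p]) := by
      rw [← hm, ← Nat.cast_pow, ← Nat.cast_mul, Nat.ordProj_mul_ordCompl_eq_self]
    rw [e_n, e_k, e_m, hU_def]
    push_cast
    ring
  obtain ⟨y, hy⟩ := hXq
  refine ⟨Ring.inverse U * y, ?_⟩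
  rw [hXCp]
  congr 1
  rw [hD]
  have hUc := Ring.mul_inverse_cancel _ hUu
  have hXy : X = 1 + (p:ℤ_[p])^(3+α+β+γ) * y := by
    rw [← hy]; ring
  rw [hXy]
  calc 1 + (p:ℤ_[p])^(3+α+β+γ) * y
      = 1 + (p:ℤ_[p])^(3+α+β+γ) * (U * Ring.inverse U) * y := by rw [hUc]; ring
    _ = 1 + (p:ℤ_[p])^(3+α+β+γ) * U * (Ring.inverse U * y) := by ring

end JK

theorem jacobsthal_kazandzidis (p : ℕ) [Fact p.Prime] (hp : 3 < p)
    (n k : ℕ) (hk : k ≤ n) :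
    ∃ z : ℤ_[p],
      (Nat.choose (p * n) (p * k) : ℤ_[p])
        = (Nat.choose n k : ℤ_[p])
            * (1 + (p : ℤ_[p]) ^ 3 * (n : ℤ_[p]) * (k : ℤ_[p]) * ((n - k : ℕ) : ℤ_[p]) * z) := by
  exact JK.jk_main hp n k hk
end
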